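/- arXiv:2205.02968 — 4 statements merged into one kernel-verified Lean document; each statement's English description precedes it below -/
import Mathlib

section
/- Let 0 < ξ < 1, θ > −ξ, γ > ξ and p ≥ 1. Let (Z_i)_{i≥1} be i.i.d. nonnegative random variables with E[Z_1^p] < ∞, and let (P_i)_{i≥1} have the GEM(ξ,θ) distribution, independent of (Z_i)_{i≥1}. Then E[ (∑_{i=1}^∞ P_i^γ Z_i)^p ] < ∞. -/
open MeasureTheory Filter Set

/-- The Beta(a,b) distribution: the measure on `(0,1)` with density
`x^{a-1}(1-x)^{b-1} Γ(a+b)/(Γ(a)Γ(b))` with respect to Lebesgue measure. -/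
noncomputable def betaMeasure (a b : ℝ) : Measure ℝ :=
  (volume.restrict (Set.Ioo (0 : ℝ) 1)).withDensity fun x =>
    ENNReal.ofReal (x ^ (a - 1) * (1 - x) ^ (b - 1) *
      (Real.Gamma (a + b) / (Real.Gamma a * Real.Gamma b)))

/-!
By Minkowski's inequality in `L^p`, it suffices that `∑ᵢ ‖Pᵢ^γ Zᵢ‖_p < ∞`. By independence,
`‖Pᵢ^γ Zᵢ‖_p^p = E[Pᵢ^t] E[Z₁^p]` with `t = γ p`, and `E[Pᵢ^t] = E[Wᵢ^t] ∏_{j<i} E[(1 - Wⱼ)^t]`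
is an explicit product of Beta-function ratios whose successive quotients are `bᵢ / (bᵢ + t)`,
`bᵢ = θ + (i + 1) ξ`. Bernoulli's inequality compares these quotients with
`((N + i) / (N + i + 1))^(t/ξ)`, so `E[Pᵢ^t] = O(i^(-t/ξ))` and the `p`-th roots are
`O(i^(-γ/ξ))`, which is summable because `γ > ξ`.
-/

open ProbabilityTheory (beta beta_pos iIndepFun IndepFun)
open scoped ENNReal

lemma lintegral_Ioo_rpow_mul_one_sub_rpow {a b : ℝ} (ha : 0 < a) (hb : 0 < b) :
    ∫⁻ x in Ioo 0 1, ENNReal.ofReal (x ^ (a - 1) * (1 - x) ^ (b - 1)) =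
      ENNReal.ofReal (beta a b) := by
  have h := ProbabilityTheory.lintegral_betaPDF_eq_one ha hb
  simp_rw [ProbabilityTheory.lintegral_betaPDF, mul_assoc,
    ENNReal.ofReal_mul (one_div_nonneg.2 (beta_pos ha hb).le)] at h
  rw [lintegral_const_mul' _ _ ENNReal.ofReal_ne_top] at h
  rw [ENNReal.eq_inv_of_mul_eq_one_left ((mul_comm _ _).trans h),
    ← ENNReal.ofReal_inv_of_pos (one_div_pos.2 (beta_pos ha hb)), one_div, inv_inv]

lemma ae_mem_Ioo_betaMeasure (a b : ℝ) : ∀ᵐ x ∂betaMeasure a b, x ∈ Ioo (0 : ℝ) 1 := by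
  rw [betaMeasure, ae_withDensity_iff (by fun_prop)]
  exact ae_restrict_mem measurableSet_Ioo |>.mono fun x hx _ => hx

lemma lintegral_rpow_mul_one_sub_rpow_betaMeasure {a b u v : ℝ} (ha : 0 < a) (hb : 0 < b)
    (hu : 0 < a + u) (hv : 0 < b + v) :
    ∫⁻ x, ENNReal.ofReal x ^ u * ENNReal.ofReal (1 - x) ^ v ∂betaMeasure a b =
      ENNReal.ofReal (beta (a + u) (b + v) / beta a b) := by
  have hc : Real.Gamma (a + b) / (Real.Gamma a * Real.Gamma b) = (beta a b)⁻¹ := by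
    rw [beta, inv_div]
  have hβ : 0 ≤ (beta a b)⁻¹ := inv_nonneg.2 (beta_pos ha hb).le
  rw [betaMeasure, lintegral_withDensity_eq_lintegral_mul _ (by fun_prop) (by fun_prop), hc]
  calc _ = ∫⁻ x in Ioo 0 1, ENNReal.ofReal (beta a b)⁻¹ *
        ENNReal.ofReal (x ^ (a + u - 1) * (1 - x) ^ (b + v - 1)) := by
        refine setLIntegral_congr_fun measurableSet_Ioo fun x ⟨hx0, hx1⟩ => ?_
        have hx1' : 0 < 1 - x := sub_pos.2 hx1
        rw [Pi.mul_apply, ENNReal.ofReal_rpow_of_pos hx0, ENNReal.ofReal_rpow_of_pos hx1',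
          ← ENNReal.ofReal_mul (by positivity), ← ENNReal.ofReal_mul (by positivity),
          ← ENNReal.ofReal_mul hβ, add_sub_right_comm a, add_sub_right_comm b, Real.rpow_add hx0,
          Real.rpow_add hx1']
        ring_nf
    _ = ENNReal.ofReal (beta (a + u) (b + v) / beta a b) := by
        rw [lintegral_const_mul _ (by fun_prop), lintegral_Ioo_rpow_mul_one_sub_rpow hu hv,
          ← ENNReal.ofReal_mul hβ, inv_mul_eq_div]

lemma beta_div_beta_nonneg {a b c d : ℝ} (ha : 0 < a) (hb : 0 < b) (hc : 0 < c) (hd : 0 < d) :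
    0 ≤ beta a b / beta c d :=
  div_nonneg (beta_pos ha hb).le (beta_pos hc hd).le

/-- For `W ~ Beta(a, b)` and `W' ~ Beta(a, b + s)` this reads
`E[W'^t] E[(1 - W)^t] = E[W^t] b / (b + t)`. -/
lemma beta_ratio_mul_beta_ratio {a b s t : ℝ} (ha : 0 < a) (hb : 0 < b) (hs : 0 ≤ s)
    (ht : 0 ≤ t) (has : a + s = 1) :
    beta (a + t) (b + s) / beta a (b + s) * (beta a (b + t) / beta a b) =
      beta (a + t) b / beta a b * (b / (b + t)) := by
  have h1 : a + (b + s) = b + 1 := by linarith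
  have h2 : a + t + (b + s) = b + t + 1 := by linarith
  simp only [beta, h1, h2, Real.Gamma_add_one hb.ne',
    Real.Gamma_add_one (by positivity : b + t ≠ 0)]
  have := Real.Gamma_pos_of_pos ha
  have := Real.Gamma_pos_of_pos hb
  have := Real.Gamma_pos_of_pos (by positivity : 0 < a + t)
  have := Real.Gamma_pos_of_pos (by positivity : 0 < b + t)
  have := Real.Gamma_pos_of_pos (by positivity : 0 < a + b)
  have := Real.Gamma_pos_of_pos (by positivity : 0 < a + (b + t))
  have := Real.Gamma_pos_of_pos (by positivity : 0 < b + s)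
  rw [show a + t + b = a + (b + t) by ring]
  field_simp

lemma div_add_le_rpow {x s : ℝ} (hx : 0 ≤ x) (hs : 1 ≤ s) :
    x / (x + s) ≤ ((x + s - 1) / (x + s)) ^ s := by
  have hxs : 0 < x + s := by linarith
  have hle : -1 ≤ -(1 / (x + s)) := by
    rw [neg_le_neg_iff, div_le_one hxs]; linarith
  calc x / (x + s) = 1 + s * -(1 / (x + s)) := by field_simp; ring
    _ ≤ (1 + -(1 / (x + s))) ^ s := one_add_mul_self_le_rpow_one_add hle hs
    _ = ((x + s - 1) / (x + s)) ^ s := by congr 1; field_simp; ring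

lemma summable_of_succ_le_mul_div_rpow {w : ℕ → ℝ} {N r : ℝ} (hw : ∀ i, 0 ≤ w i) (hN : 0 < N)
    (hr : 1 < r) (h : ∀ i, w (i + 1) ≤ w i * ((N + i) / (N + i + 1)) ^ r) : Summable w := by
  have hanti : Antitone fun i : ℕ => w i * (N + i) ^ r := by
    refine antitone_nat_of_succ_le fun i => ?_
    have hNi : 0 < N + i := by positivity
    calc w (i + 1) * (N + ↑(i + 1)) ^ r
        ≤ w i * ((N + i) / (N + i + 1)) ^ r * (N + i + 1) ^ r := by
          push_cast; rw [← add_assoc]; gcongr; exact h i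
      _ = w i * (N + i) ^ r := by
          rw [Real.div_rpow hNi.le (by positivity), mul_assoc, div_mul_cancel₀]
          positivity
  have hbound : ∀ i : ℕ, w i ≤ w 0 * N ^ r * (1 / |i + N| ^ r) := fun i => by
    have hNi : 0 < (i : ℝ) + N := by positivity
    have := hanti (Nat.zero_le i)
    rw [abs_of_pos hNi, add_comm, mul_one_div, le_div_iff₀ (by positivity)]
    simpa using this
  exact .of_nonneg_of_le hw hbound
    (((Real.summable_one_div_nat_add_rpow N r).2 hr).mul_left _)

lemma summable_rpow_of_succ_eq_mul_div {m : ℕ → ℝ} {c s q : ℝ} (hm : ∀ i, 0 ≤ m i) (hc : 0 < c)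
    (hs : 1 ≤ s) (hsq : 1 < s * q) (h : ∀ i, m (i + 1) = m i * ((c + i) / (c + i + s))) :
    Summable fun i => m i ^ q := by
  have hq : 0 ≤ q := by nlinarith
  refine summable_of_succ_le_mul_div_rpow (N := c + s - 1) (fun i => Real.rpow_nonneg (hm i) q)
    (by linarith) hsq fun i => ?_
  have hci : 0 ≤ c + i := by positivity
  calc m (i + 1) ^ q = m i ^ q * ((c + i) / (c + i + s)) ^ q := by
        rw [h, Real.mul_rpow (hm i) (by positivity)]
    _ ≤ m i ^ q * (((c + i + s - 1) / (c + i + s)) ^ s) ^ q := by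
        gcongr
        · exact Real.rpow_nonneg (hm i) q
        · exact div_add_le_rpow hci hs
    _ = m i ^ q * ((c + s - 1 + i) / (c + s - 1 + i + 1)) ^ (s * q) := by
        rw [← Real.rpow_mul (div_nonneg (by linarith) (by linarith))]
        ring_nf

section Integration

variable {Ω : Type*} [MeasurableSpace Ω] {μ : Measure Ω}

lemma lintegral_tsum_rpow_le {p : ℝ} (hp : 1 ≤ p) {f : ℕ → Ω → ℝ≥0∞}
    (hf : ∀ i, AEMeasurable (f i) μ) :
    ∫⁻ a, (∑' i, f i a) ^ p ∂μ ≤ (∑' i, (∫⁻ a, f i a ^ p ∂μ) ^ (1 / p)) ^ p := by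
  have hp0 : 0 < p := by linarith
  have hpartial : ∀ n, ∫⁻ a, (∑ i ∈ Finset.range n, f i a) ^ p ∂μ ≤
      (∑' i, (∫⁻ a, f i a ^ p ∂μ) ^ (1 / p)) ^ p := fun n => by
    have hmink := eLpNorm'_sum_le (s := Finset.range n) (fun i _ => (hf i).aestronglyMeasurable) hp
    simp only [eLpNorm'_eq_lintegral_enorm, enorm_eq_self, Finset.sum_apply] at hmink
    rw [one_div, ENNReal.rpow_inv_le_iff hp0, ← one_div] at hmink
    exact hmink.trans (by gcongr; exact ENNReal.sum_le_tsum _)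
  calc ∫⁻ a, (∑' i, f i a) ^ p ∂μ
      = ∫⁻ a, ⨆ n, (∑ i ∈ Finset.range n, f i a) ^ p ∂μ := by
        simp_rw [ENNReal.tsum_eq_iSup_nat]
        congr! 2 with a
        exact (ENNReal.orderIsoRpow p hp0).map_iSup _
    _ = ⨆ n, ∫⁻ a, (∑ i ∈ Finset.range n, f i a) ^ p ∂μ := by
        refine lintegral_iSup' (fun n => ?_) (ae_of_all _ fun a m n hmn => ?_)
        · exact (Finset.aemeasurable_fun_sum _ fun i _ => hf i).pow_const p
        · exact ENNReal.rpow_le_rpow (Finset.sum_le_sum_of_subset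
            (Finset.range_subset_range.2 hmn)) hp0.le
    _ ≤ _ := iSup_le hpartial

lemma lintegral_mul_prod_of_iIndepFun {ι β : Type*} [DecidableEq ι] [MeasurableSpace β]
    {X : ι → Ω → β} (hX : iIndepFun X μ) (hXm : ∀ i, Measurable (X i)) {f g : β → ℝ≥0∞}
    (hf : Measurable f) (hg : Measurable g) {i : ι} {s : Finset ι} (hi : i ∉ s) :
    ∫⁻ ω, f (X i ω) * ∏ j ∈ s, g (X j ω) ∂μ =
      (∫⁻ ω, f (X i ω) ∂μ) * ∏ j ∈ s, ∫⁻ ω, g (X j ω) ∂μ := by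
  let φ : ι → β → ℝ≥0∞ := fun j => if j = i then f else g
  have hφ : ∀ j, Measurable (φ j) := fun j => by unfold φ; split_ifs <;> assumption
  have key := ProbabilityTheory.lintegral_prod_eq_prod_lintegral_of_indepFun (insert i s)
    (fun j ω => φ j (X j ω)) (hX.comp φ hφ) fun j => (hφ j).comp (hXm j)
  have hne : ∀ j ∈ s, j ≠ i := fun j hj => ne_of_mem_of_not_mem hj hi
  simpa +contextual only [Finset.prod_insert hi, φ, if_pos, hne, if_false] using key

lemma lintegral_ofReal_rpow_mul_of_indepFun {P Z : Ω → ℝ} (hP : 0 ≤ᵐ[μ] P)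
    (hPm : Measurable P) (hZm : Measurable Z) (hPZ : IndepFun P Z μ) {γ p : ℝ} (hγ : 0 ≤ γ)
    (hp : 0 ≤ p) :
    ∫⁻ ω, ENNReal.ofReal (P ω ^ γ * Z ω) ^ p ∂μ =
      (∫⁻ ω, ENNReal.ofReal (P ω) ^ (γ * p) ∂μ) * ∫⁻ ω, ENNReal.ofReal (Z ω) ^ p ∂μ := by
  have hind : IndepFun (fun ω => ENNReal.ofReal (P ω) ^ (γ * p))
      (fun ω => ENNReal.ofReal (Z ω) ^ p) μ :=
    hPZ.comp (φ := fun x => ENNReal.ofReal x ^ (γ * p)) (ψ := fun x => ENNReal.ofReal x ^ p)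
      (by fun_prop) (by fun_prop)
  rw [← ProbabilityTheory.lintegral_mul_eq_lintegral_mul_lintegral_of_indepFun''
    (by fun_prop) (by fun_prop) hind]
  refine lintegral_congr_ae (hP.mono fun ω (hω : 0 ≤ P ω) => ?_)
  dsimp only
  rw [ENNReal.ofReal_mul (Real.rpow_nonneg hω γ), ENNReal.mul_rpow_of_nonneg _ _ hp,
    ← ENNReal.ofReal_rpow_of_nonneg hω hγ, ← ENNReal.rpow_mul]

lemma ae_forall_mem_Icc_of_map_eq_betaMeasure {ι : Type*} [Countable ι] {X : ι → Ω → ℝ}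
    (hX : ∀ j, AEMeasurable (X j) μ) {a b : ι → ℝ}
    (hlaw : ∀ j, μ.map (X j) = betaMeasure (a j) (b j)) :
    ∀ᵐ ω ∂μ, ∀ j, X j ω ∈ Icc (0 : ℝ) 1 :=
  ae_all_iff.2 fun j => (ae_of_ae_map (hX j) (hlaw j ▸ ae_mem_Ioo_betaMeasure _ _)).mono
    fun _ h => Ioo_subset_Icc_self h

lemma lintegral_rpow_mul_one_sub_rpow_of_map_eq_betaMeasure {X : Ω → ℝ} (hX : Measurable X)
    {a b u v : ℝ} (hlaw : μ.map X = betaMeasure a b) (ha : 0 < a) (hb : 0 < b) (hu : 0 < a + u)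
    (hv : 0 < b + v) :
    ∫⁻ ω, ENNReal.ofReal (X ω) ^ u * ENNReal.ofReal (1 - X ω) ^ v ∂μ =
      ENNReal.ofReal (beta (a + u) (b + v) / beta a b) := by
  rw [← lintegral_map (f := fun x => ENNReal.ofReal x ^ u * ENNReal.ofReal (1 - x) ^ v)
    (by fun_prop) hX, hlaw, lintegral_rpow_mul_one_sub_rpow_betaMeasure ha hb hu hv]

end Integration

def stickBreaking (W : ℕ → ℝ) (i : ℕ) : ℝ := W i * ∏ j ∈ Finset.range i, (1 - W j)

lemma stickBreaking_nonneg {W : ℕ → ℝ} (hW : ∀ j, W j ∈ Icc (0 : ℝ) 1) (i : ℕ) :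
    0 ≤ stickBreaking W i :=
  mul_nonneg (hW i).1 (Finset.prod_nonneg fun j _ => sub_nonneg.2 (hW j).2)

lemma ofReal_stickBreaking_rpow {W : ℕ → ℝ} (hW : ∀ j, W j ∈ Icc (0 : ℝ) 1) (i : ℕ) {t : ℝ}
    (ht : 0 ≤ t) :
    ENNReal.ofReal (stickBreaking W i) ^ t =
      ENNReal.ofReal (W i) ^ t * ∏ j ∈ Finset.range i, ENNReal.ofReal (1 - W j) ^ t := by
  rw [stickBreaking, ENNReal.ofReal_mul (hW i).1,
    ENNReal.ofReal_prod_of_nonneg fun j _ => sub_nonneg.2 (hW j).2,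
    ENNReal.mul_rpow_of_nonneg _ _ ht, ENNReal.prod_rpow_of_nonneg ht]

@[fun_prop]
lemma measurable_stickBreaking (i : ℕ) : Measurable fun W : ℕ → ℝ => stickBreaking W i := by
  unfold stickBreaking; fun_prop

/-- `gemMoment ξ θ t i = E[P_i ^ t]` for `(P_i) ~ GEM(ξ, θ)`, indexed from `i = 0`. -/
noncomputable def gemMoment (ξ θ t : ℝ) (i : ℕ) : ℝ :=
  beta (1 - ξ + t) (θ + (i + 1) * ξ) / beta (1 - ξ) (θ + (i + 1) * ξ) *
    ∏ j ∈ Finset.range i, beta (1 - ξ) (θ + (j + 1) * ξ + t) / beta (1 - ξ) (θ + (j + 1) * ξ)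

lemma add_natSucc_mul_pos {ξ θ : ℝ} (hξ : 0 < ξ) (hθ : -ξ < θ) (j : ℕ) : 0 < θ + (j + 1) * ξ := by
  nlinarith [(j.cast_nonneg : (0 : ℝ) ≤ j)]

lemma gemMoment_nonneg {ξ θ t : ℝ} (hξ0 : 0 < ξ) (hξ1 : ξ < 1) (hθ : -ξ < θ) (ht : 0 ≤ t)
    (i : ℕ) : 0 ≤ gemMoment ξ θ t i := by
  have hb := add_natSucc_mul_pos hξ0 hθ
  exact mul_nonneg (beta_div_beta_nonneg (by linarith) (hb i) (by linarith) (hb i))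
    (Finset.prod_nonneg fun j _ =>
      beta_div_beta_nonneg (by linarith) (by linarith [hb j]) (by linarith) (hb j))

lemma gemMoment_succ {ξ θ t : ℝ} (hξ0 : 0 < ξ) (hξ1 : ξ < 1) (hθ : -ξ < θ) (ht : 0 ≤ t)
    (i : ℕ) : gemMoment ξ θ t (i + 1) =
      gemMoment ξ θ t i * ((θ + (i + 1) * ξ) / (θ + (i + 1) * ξ + t)) := by
  have hnext : θ + ((i + 1 : ℕ) + 1) * ξ = θ + (i + 1) * ξ + ξ := by push_cast; ring
  have key := beta_ratio_mul_beta_ratio (by linarith : 0 < 1 - ξ) (add_natSucc_mul_pos hξ0 hθ i)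
    hξ0.le ht (sub_add_cancel 1 ξ)
  rw [gemMoment, gemMoment, hnext, Finset.prod_range_succ, ← mul_assoc, mul_comm, ← mul_assoc,
    mul_comm _ (beta _ _ / beta _ _), key]
  ring

lemma summable_gemMoment_rpow {ξ θ t q : ℝ} (hξ0 : 0 < ξ) (hξ1 : ξ < 1) (hθ : -ξ < θ)
    (hξt : ξ ≤ t) (htq : ξ < t * q) : Summable fun i => gemMoment ξ θ t i ^ q := by
  refine summable_rpow_of_succ_eq_mul_div (c := (θ + ξ) / ξ) (s := t / ξ)
    (gemMoment_nonneg hξ0 hξ1 hθ (by linarith)) (div_pos (by linarith) hξ0)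
    ((one_le_div hξ0).2 hξt) (by rwa [div_mul_eq_mul_div, one_lt_div hξ0]) fun i => ?_
  have hb := add_natSucc_mul_pos hξ0 hθ i
  rw [gemMoment_succ hξ0 hξ1 hθ (by linarith)]
  congr 1
  field_simp
  ring

section StickBreaking

variable {Ω : Type*} [MeasurableSpace Ω] {μ : Measure Ω}

lemma lintegral_stickBreaking_rpow {ξ θ t : ℝ} (hξ0 : 0 < ξ) (hξ1 : ξ < 1) (hθ : -ξ < θ)
    (ht : 0 ≤ t) {W : ℕ → Ω → ℝ} (hWm : ∀ j, Measurable (W j)) (hW : iIndepFun W μ)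
    (hWlaw : ∀ j : ℕ, μ.map (W j) = betaMeasure (1 - ξ) (θ + (j + 1) * ξ)) (i : ℕ) :
    ∫⁻ ω, ENNReal.ofReal (stickBreaking (W · ω) i) ^ t ∂μ = ENNReal.ofReal (gemMoment ξ θ t i) := by
  have ha : 0 < 1 - ξ := by linarith
  have hb := add_natSucc_mul_pos hξ0 hθ
  have hW01 := ae_forall_mem_Icc_of_map_eq_betaMeasure (fun j => (hWm j).aemeasurable) hWlaw
  have hWt : ∫⁻ ω, ENNReal.ofReal (W i ω) ^ t ∂μ = ENNReal.ofReal
      (beta (1 - ξ + t) (θ + (i + 1) * ξ) / beta (1 - ξ) (θ + (i + 1) * ξ)) := by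
    simpa using lintegral_rpow_mul_one_sub_rpow_of_map_eq_betaMeasure (hWm i) (hWlaw i) ha (hb i)
      (u := t) (v := 0) (by linarith) (by simpa using hb i)
  have h1Wt : ∀ j : ℕ, ∫⁻ ω, ENNReal.ofReal (1 - W j ω) ^ t ∂μ = ENNReal.ofReal
      (beta (1 - ξ) (θ + (j + 1) * ξ + t) / beta (1 - ξ) (θ + (j + 1) * ξ)) := fun j => by
    simpa using lintegral_rpow_mul_one_sub_rpow_of_map_eq_betaMeasure (hWm j) (hWlaw j) ha (hb j)
      (u := 0) (v := t) (by simpa using ha) (by linarith [hb j])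
  rw [lintegral_congr_ae (hW01.mono fun ω hω => ofReal_stickBreaking_rpow hω i ht),
    lintegral_mul_prod_of_iIndepFun (f := fun x => ENNReal.ofReal x ^ t)
      (g := fun x => ENNReal.ofReal (1 - x) ^ t) hW hWm (by fun_prop) (by fun_prop)
      Finset.notMem_range_self,
    hWt, Finset.prod_congr rfl fun j _ => h1Wt j,
    ← ENNReal.ofReal_prod_of_nonneg fun j _ =>
      beta_div_beta_nonneg ha (by linarith [hb j]) ha (hb j),
    ← ENNReal.ofReal_mul (beta_div_beta_nonneg (by linarith) (hb i) ha (hb i)), gemMoment]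

lemma lintegral_ofReal_stickBreaking_rpow_mul {ξ θ γ p : ℝ} (hξ0 : 0 < ξ) (hξ1 : ξ < 1)
    (hθ : -ξ < θ) (hγ : 0 ≤ γ) (hp : 0 ≤ p) {W : ℕ → Ω → ℝ} (hWm : ∀ j, Measurable (W j))
    (hW : iIndepFun W μ) (hWlaw : ∀ j : ℕ, μ.map (W j) = betaMeasure (1 - ξ) (θ + (j + 1) * ξ))
    {Y : Ω → ℝ} (hYm : Measurable Y) (hYW : IndepFun Y (fun ω j => W j ω) μ) (i : ℕ) :
    ∫⁻ ω, ENNReal.ofReal (stickBreaking (W · ω) i ^ γ * Y ω) ^ p ∂μ =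
      ENNReal.ofReal (gemMoment ξ θ (γ * p) i) * ∫⁻ ω, ENNReal.ofReal (Y ω) ^ p ∂μ := by
  have hP0 : 0 ≤ᵐ[μ] fun ω => stickBreaking (W · ω) i :=
    (ae_forall_mem_Icc_of_map_eq_betaMeasure (fun j => (hWm j).aemeasurable) hWlaw).mono
      fun _ hω => stickBreaking_nonneg hω i
  rw [lintegral_ofReal_rpow_mul_of_indepFun hP0 (by fun_prop) hYm
      (hYW.symm.comp (measurable_stickBreaking i) measurable_id) hγ hp,
    lintegral_stickBreaking_rpow hξ0 hξ1 hθ (by positivity) hWm hW hWlaw]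

end StickBreaking

theorem gem_weighted_sum_moment_general
    {Ω : Type*} [MeasurableSpace Ω] (Pr : Measure Ω)
    (ξ θ γ p : ℝ) (hξ0 : 0 < ξ) (hξ1 : ξ < 1) (hθ : -ξ < θ) (hγ : ξ < γ) (hp : 1 ≤ p)
    -- the stick-breaking variables W_j, j ≥ 1 (here `W j` stands for `W_{j+1}`)
    (W : ℕ → Ω → ℝ) (hWmeas : ∀ j, Measurable (W j))
    (hWindep : ProbabilityTheory.iIndepFun W Pr)
    (hWlaw : ∀ j : ℕ, Measure.map (W j) Pr = betaMeasure (1 - ξ) (θ + (j + 1) * ξ))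
    -- the i.i.d. nonnegative variables Z_i with a p-th moment
    (Z : ℕ → Ω → ℝ) (hZmeas : ∀ i, Measurable (Z i))
    (hZident : ∀ i : ℕ, Measure.map (Z i) Pr = Measure.map (Z 0) Pr)
    (hZmom : ∫⁻ ω, ENNReal.ofReal (Z 0 ω) ^ p ∂Pr < ⊤)
    -- (Z_i)_{i} is independent of (W_j)_{j}
    (hZW : ProbabilityTheory.IndepFun (fun ω i => Z i ω) (fun ω j => W j ω) Pr) :
    -- with P_i := W_i ∏_{j<i} (1 - W_j), the GEM(ξ,θ) sequence:
    ∫⁻ ω, (∑' i : ℕ,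
        ENNReal.ofReal ((W i ω * ∏ j ∈ Finset.range i, (1 - W j ω)) ^ γ * Z i ω)) ^ p
      ∂Pr < ⊤ := by
  have hp0 : 0 < p := by linarith
  have hγ0 : 0 < γ := by linarith
  have hnorm : ∀ i, (∫⁻ ω, ENNReal.ofReal (stickBreaking (W · ω) i ^ γ * Z i ω) ^ p ∂Pr) ^ (1 / p) =
      ENNReal.ofReal (gemMoment ξ θ (γ * p) i ^ (1 / p)) *
        (∫⁻ ω, ENNReal.ofReal (Z 0 ω) ^ p ∂Pr) ^ (1 / p) := fun i => by
    rw [lintegral_ofReal_stickBreaking_rpow_mul hξ0 hξ1 hθ hγ0.le hp0.le hWmeas hWindep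
        hWlaw (hZmeas i) (hZW.comp (measurable_pi_apply i) measurable_id) i,
      ← lintegral_map (f := fun x => ENNReal.ofReal x ^ p) (by fun_prop) (hZmeas i), hZident,
      lintegral_map (by fun_prop) (hZmeas 0), ENNReal.mul_rpow_of_nonneg _ _ (by positivity),
      ENNReal.ofReal_rpow_of_nonneg (gemMoment_nonneg hξ0 hξ1 hθ (by positivity) i)
        (by positivity)]
  have hsum := summable_gemMoment_rpow hξ0 hξ1 hθ (t := γ * p) (q := 1 / p) (by nlinarith)
    (by rwa [mul_one_div, mul_div_cancel_right₀ _ hp0.ne'])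
  refine (lintegral_tsum_rpow_le hp (f := fun i ω =>
    ENNReal.ofReal (stickBreaking (W · ω) i ^ γ * Z i ω)) fun i => by fun_prop).trans_lt
    (ENNReal.rpow_lt_top_of_nonneg hp0.le ?_)
  rw [tsum_congr hnorm, ENNReal.tsum_mul_right, ← ENNReal.ofReal_tsum_of_nonneg
    (fun i => Real.rpow_nonneg (gemMoment_nonneg hξ0 hξ1 hθ (by positivity) i) _) hsum]
  exact ENNReal.mul_ne_top ENNReal.ofReal_ne_top
    (ENNReal.rpow_ne_top_of_nonneg (by positivity) hZmom.ne)

/-- Lemma 5.3. Let `0 < ξ < 1`, `θ > -ξ`, `γ > ξ`, `p ≥ 1`. If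
`(Z_i)` are i.i.d. nonnegative with `E[Z_1^p] < ∞` and `(P_i) ~ GEM(ξ,θ)` is independent
of `(Z_i)`, i.e. `P_i = W_i ∏_{j<i} (1-W_j)` with `(W_j)` independent,
`W_j ~ Beta(1-ξ, θ+jξ)`, then `E[(∑_i P_i^γ Z_i)^p] < ∞`. -/
theorem gem_weighted_sum_moment
    {Ω : Type*} [MeasurableSpace Ω] (Pr : Measure Ω) [IsProbabilityMeasure Pr]
    (ξ θ γ p : ℝ) (hξ0 : 0 < ξ) (hξ1 : ξ < 1) (hθ : -ξ < θ) (hγ : ξ < γ) (hp : 1 ≤ p)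
    -- the stick-breaking variables W_j, j ≥ 1 (here `W j` stands for `W_{j+1}`)
    (W : ℕ → Ω → ℝ) (hWmeas : ∀ j, Measurable (W j))
    (hWindep : ProbabilityTheory.iIndepFun W Pr)
    (hWlaw : ∀ j : ℕ, Measure.map (W j) Pr = betaMeasure (1 - ξ) (θ + (j + 1) * ξ))
    -- the i.i.d. nonnegative variables Z_i with a p-th moment
    (Z : ℕ → Ω → ℝ) (hZmeas : ∀ i, Measurable (Z i))
    (hZnonneg : ∀ i ω, 0 ≤ Z i ω)
    (hZident : ∀ i : ℕ, Measure.map (Z i) Pr = Measure.map (Z 0) Pr)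
    (hZindep : ProbabilityTheory.iIndepFun Z Pr)
    (hZmom : ∫⁻ ω, ENNReal.ofReal (Z 0 ω) ^ p ∂Pr < ⊤)
    -- (Z_i)_{i} is independent of (W_j)_{j}
    (hZW : ProbabilityTheory.IndepFun (fun ω i => Z i ω) (fun ω j => W j ω) Pr) :
    -- with P_i := W_i ∏_{j<i} (1 - W_j), the GEM(ξ,θ) sequence:
    ∫⁻ ω, (∑' i : ℕ,
        ENNReal.ofReal ((W i ω * ∏ j ∈ Finset.range i, (1 - W j ω)) ^ γ * Z i ω)) ^ p
      ∂Pr < ⊤ :=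
  gem_weighted_sum_moment_general Pr ξ θ γ p hξ0 hξ1 hθ hγ hp W hWmeas hWindep hWlaw Z hZmeas
    hZident hZmom hZW
end

section
/- Let μ be a critical offspring distribution with μ(1) < 1, let (E,ℰ) be a measurable space, let (π_k)_{k≥0} be probability measures on E, and let 𝒫 ⊆ 𝔸 be a measurable set of marked ancestral lines. Let T be a BGW_μ tree with conditionally independent marks X_u ~ π_{out_T(u)} forming the marked tree T̃, and, on the event {∃v ∈ T : A(T̃,v) ∈ 𝒫}, let U be, conditionally on T̃, uniformly distributed on {v ∈ T : A(T̃,v) ∈ 𝒫}. Then for every measurable function F from marked pointed plane trees to [0,∞]: E[ F(T̃,U) · 1{∃v ∈ T : A(T̃,v) ∈ 𝒫} ] = ∑_{k≥0} E[ F(T̃*_k, U*_k) · 1{A(T̃*_k, U*_k) ∈ 𝒫} / #{v ∈ T*_k : A(T̃*_k, v) ∈ 𝒫} ], where (T̃*_k, U*_k) is the marked cut Kesten tree with spine of length k. -/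
/-! If `u ∈ t` has height `k`, each spine vertex `[u]_i`, `i < k`, has a child, so its factor
`d · μ(d) · d⁻¹` in the cut Kesten weight is just `μ(d)`: the cut Kesten tree with spine of
length `k` equals `(t, u)` with exactly the `BGW_μ` probability of `t`. Summed over `k`, the laws
of the marked cut Kesten trees therefore add up to the marked `BGW_μ` tree pointed at each of its
vertices in turn. Integrating `1{A(t̃, u) ∈ PP} · F / #good` against both sides gives the claim:
on the `BGW_μ` side, the sum over the good vertices divided by their number is the conditional
expectation over the uniform good vertex `U`. -/

open MeasureTheory Filter Set

/-- A plane tree: a finite, prefix-closed set of finite sequences of positive integers,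
containing the empty sequence, such that the children of each vertex `v` are exactly
`v ++ [i]` for `1 ≤ i ≤ d` for some outdegree `d`. -/
structure PlaneTree where
  verts : Finset (List ℕ)
  root_mem : ([] : List ℕ) ∈ verts
  prefix_closed : ∀ v ∈ verts, ∀ u : List ℕ, u <+: v → u ∈ verts
  children : ∀ v ∈ verts, ∃ d : ℕ, ∀ i : ℕ, v ++ [i] ∈ verts ↔ 1 ≤ i ∧ i ≤ d

namespace PlaneTree

open Classical in
/-- The outdegree of a vertex `v` in a plane tree: its number of children. -/
noncomputable def out (T : PlaneTree) (v : List ℕ) : ℕ :=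
  (T.verts.filter fun w => ∃ i : ℕ, w = v ++ [i]).card

/-- The number of vertices of a plane tree. -/
def size (T : PlaneTree) : ℕ := T.verts.card

instance : Countable PlaneTree := by
  have h : Function.Injective fun T : PlaneTree => T.verts := by
    intro a b hab
    cases a; cases b
    simp only at hab
    subst hab
    rfl
  exact h.countable

end PlaneTree

/-- The Bienaymé–Galton–Watson weight of a plane tree. -/
noncomputable def BGWweight (μ : ℕ → ℝ) (T : PlaneTree) : ℝ :=
  ∏ v ∈ T.verts, μ (T.out v)

/-- Tail of an offspring distribution `μ`: `μ([x,∞))`. -/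
noncomputable def muTail (μ : ℕ → ℝ) (x : ℝ) : ℝ :=
  ∑' k : ℕ, if x ≤ k then μ k else 0

/-- A function is regularly varying at infinity with index `ρ`. -/
def RegularlyVarying (f : ℝ → ℝ) (ρ : ℝ) : Prop :=
  ∀ l : ℝ, 0 < l → Tendsto (fun x => f (l * x) / f x) atTop (nhds (l ^ ρ))

/-- The scaling sequence `b_n` associated to an offspring distribution in the domain
of attraction of an `α`-stable law. -/
noncomputable def bSeq (α : ℝ) (μ : ℕ → ℝ) (n : ℕ) : ℝ :=
  ((α - 1) / Real.Gamma (2 - α)) ^ (-(1 / α)) * sInf {y : ℝ | 0 ≤ y ∧ muTail μ y ≤ 1 / n}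

open Classical in
/-- The total `BGW_μ`-weight of plane trees with `n` vertices; the conditioned tree `T_n`
is well-defined iff this is nonzero. -/
noncomputable def Zpart (μ : ℕ → ℝ) (n : ℕ) : ENNReal :=
  ∑' T : PlaneTree, if T.size = n then ENNReal.ofReal (BGWweight μ T) else 0

section Spine

/-- A measurable space on lists, via the encoding of a list as its length together with
its entries. -/
instance listMeasurableSpace {β : Type*} [MeasurableSpace β] : MeasurableSpace (List β) :=
  MeasurableSpace.comap
    (fun l : List β => (⟨l.length, fun i => l.get i⟩ : Σ n : ℕ, (Fin n → β)))
    inferInstance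

variable {E : Type*} [MeasurableSpace E]

/-- The product law of the marks on the vertices of a fixed plane tree `t`: the marks are
independent, the mark at `v` having law `π_{out(v)}`. -/
noncomputable def markProd (π : ℕ → Measure E) (hπ : ∀ k, IsProbabilityMeasure (π k))
    (t : PlaneTree) : Measure ({v // v ∈ t.verts} → E) :=
  haveI : ∀ v : {v // v ∈ t.verts}, SigmaFinite (π (t.out v.val)) := fun v =>
    haveI := hπ (t.out v.val); inferInstance
  Measure.pi fun v : {v // v ∈ t.verts} => π (t.out v.val)

/-- The law of the marked `BGW_μ` tree `T̃`: the tree `t` has probability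
`∏_{v ∈ t} μ(out(v))` and, conditionally on `t`, the marks are independent with laws
`π_{out(v)}`. -/
noncomputable def markedBGW (μ : ℕ → ℝ) (π : ℕ → Measure E)
    (hπ : ∀ k, IsProbabilityMeasure (π k)) :
    Measure (Σ t : PlaneTree, ({v // v ∈ t.verts} → E)) :=
  Measure.sum fun t : PlaneTree =>
    ENNReal.ofReal (BGWweight μ t) • Measure.map (Sigma.mk t) (markProd π hπ t)

open Classical in
/-- The probability that the cut Kesten tree with spine of length `k` equals the pointed
tree `(t,u)`: the spine vertices `[u]_0, …, [u]_{k-1}` are produced by the size-biased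
law `μ*` together with a uniform choice of the child on the spine (contributing
`out·μ(out)·(1/out)` each), while every other vertex of `t` is the root of a grafted
`BGW_μ` tree and contributes `μ(out)`. -/
noncomputable def cutKestenWeight (μ : ℕ → ℝ) (k : ℕ) (t : PlaneTree) (u : List ℕ) : ℝ :=
  if u ∈ t.verts ∧ u.length = k then
    (∏ i ∈ Finset.range k,
        ((t.out (u.take i) : ℝ) * μ (t.out (u.take i)) * ((t.out (u.take i) : ℝ))⁻¹)) *
      ∏ v ∈ t.verts.filter fun v => ¬(v <+: u ∧ v ≠ u), μ (t.out v)
  else 0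

/-- The law of the marked cut Kesten tree `(T̃*_k, U*_k)` with spine of length `k`:
the pointed tree `(t,u)` has probability `cutKestenWeight μ k t u` and, conditionally on
it, the marks are independent with laws `π_{out(v)}`. -/
noncomputable def markedCutKesten (μ : ℕ → ℝ) (π : ℕ → Measure E)
    (hπ : ∀ k, IsProbabilityMeasure (π k)) (k : ℕ) :
    Measure (Σ t : PlaneTree, ({v // v ∈ t.verts} → E) × {v // v ∈ t.verts}) :=
  Measure.sum fun p : PlaneTree × List ℕ =>
    ENNReal.ofReal (cutKestenWeight μ k p.1 p.2) •
      if h : p.2 ∈ p.1.verts then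
        Measure.map (fun x => ⟨p.1, (x, ⟨p.2, h⟩)⟩) (markProd π hπ p.1)
      else 0

/-- The marked ancestral line `A(t̃,v)` of a vertex `v` in a marked tree: the list of
pairs (outdegree, mark) along the path `[v]_0, [v]_1, …, [v]_{|v|} = v` from the root
to `v`. -/
noncomputable def ancLine (t : PlaneTree) (x : {v // v ∈ t.verts} → E)
    (v : {v // v ∈ t.verts}) : List (ℕ × E) :=
  (List.range (v.val.length + 1)).map fun i =>
    (t.out (v.val.take i),
      x ⟨v.val.take i, t.prefix_closed v.val v.property _ (List.take_prefix i v.val)⟩)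

open Classical in
/-- The set of vertices of a marked tree whose marked ancestral line has the
property `PP`. -/
noncomputable def goodSet (PP : Set (List (ℕ × E))) (t : PlaneTree)
    (x : {v // v ∈ t.verts} → E) : Finset {v // v ∈ t.verts} :=
  t.verts.attach.filter fun v => ancLine t x v ∈ PP

section MeasurableSigma

variable {ι : Type*} {β : ι → Type*} [∀ i, MeasurableSpace (β i)]

theorem measurableSet_sigma_iff {s : Set (Σ i, β i)} :
    MeasurableSet s ↔ ∀ i, MeasurableSet (Sigma.mk i ⁻¹' s) :=
  MeasurableSpace.measurableSet_iInf

theorem measurable_sigmaMk (i : ι) : Measurable (Sigma.mk i : β i → Σ i, β i) :=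
  fun _ hs => measurableSet_sigma_iff.1 hs i

theorem measurableEmbedding_sigmaMk (i : ι) :
    MeasurableEmbedding (Sigma.mk i : β i → Σ i, β i) := by
  refine ⟨sigma_mk_injective, measurable_sigmaMk i, fun s hs => measurableSet_sigma_iff.2 ?_⟩
  intro j
  rcases eq_or_ne j i with rfl | hji
  · rwa [Set.preimage_image_eq _ sigma_mk_injective]
  · convert MeasurableSet.empty
    exact Set.eq_empty_of_forall_notMem fun y ⟨z, _, h⟩ => hji (congrArg Sigma.fst h).symm

instance [∀ i, MeasurableSingletonClass (β i)] : MeasurableSingletonClass (Σ i, β i) := by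
  refine ⟨fun ⟨i, y⟩ => ?_⟩
  rw [← Set.image_singleton]
  exact (measurableEmbedding_sigmaMk i).measurableSet_image' (measurableSet_singleton y)

end MeasurableSigma

section MeasurableList

theorem list_encoding_injective {β : Type*} :
    Function.Injective fun l : List β => (⟨l.length, l.get⟩ : Σ n : ℕ, (Fin n → β)) :=
  Function.LeftInverse.injective (g := fun p : Σ n : ℕ, (Fin n → β) => List.ofFn p.2)
    List.ofFn_get

variable {α β : Type*} [MeasurableSpace α] [MeasurableSpace β]

instance [MeasurableSingletonClass β] : MeasurableSingletonClass (List β) := by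
  refine ⟨fun l => ⟨{⟨l.length, l.get⟩}, measurableSet_singleton _, ?_⟩⟩
  ext m
  exact list_encoding_injective.eq_iff

theorem measurable_list_ofFn {n : ℕ} {f : α → Fin n → β} (hf : Measurable f) :
    Measurable fun a => List.ofFn (f a) := by
  refine measurable_comap_iff.2 ?_
  convert (measurable_sigmaMk (β := fun n => Fin n → β) n).comp hf using 1
  funext a
  exact Sigma.ext (List.length_ofFn) ((Fin.heq_fun_iff List.length_ofFn).2 fun i => by simp)

end MeasurableList

namespace PlaneTree

theorem out_take_ne_zero (t : PlaneTree) {u : List ℕ} (hu : u ∈ t.verts) {i : ℕ}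
    (hi : i < u.length) : t.out (u.take i) ≠ 0 := by
  classical
  refine Finset.card_ne_zero.2 ⟨u.take (i + 1), Finset.mem_filter.2 ⟨?_, u[i], ?_⟩⟩
  · exact t.prefix_closed u hu _ (List.take_prefix _ _)
  · exact (List.take_concat_get' u i hi).symm

theorem filter_strictPrefix_eq_image_take (t : PlaneTree) {u : List ℕ} (hu : u ∈ t.verts) :
    t.verts.filter (fun v => v <+: u ∧ v ≠ u) = (Finset.range u.length).image u.take := by
  ext v
  simp only [Finset.mem_filter, Finset.mem_image, Finset.mem_range]
  constructor
  · rintro ⟨-, hvu, hne⟩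
    exact ⟨v.length, lt_of_le_of_ne hvu.length_le (hne ∘ hvu.eq_of_length),
      (List.prefix_iff_eq_take.1 hvu).symm⟩
  · rintro ⟨i, hi, rfl⟩
    refine ⟨t.prefix_closed u hu _ (List.take_prefix _ _), List.take_prefix _ _, fun h => ?_⟩
    have := congrArg List.length h
    simp only [List.length_take] at this
    omega

end PlaneTree

theorem cutKestenWeight_eq_zero {μ : ℕ → ℝ} {k : ℕ} {t : PlaneTree} {u : List ℕ}
    (h : ¬(u ∈ t.verts ∧ u.length = k)) : cutKestenWeight μ k t u = 0 :=
  if_neg h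

theorem cutKestenWeight_length (μ : ℕ → ℝ) {t : PlaneTree} {u : List ℕ} (hu : u ∈ t.verts) :
    cutKestenWeight μ u.length t u = BGWweight μ t := by
  classical
  rw [cutKestenWeight, if_pos ⟨hu, rfl⟩, BGWweight,
    ← Finset.prod_filter_mul_prod_filter_not t.verts (fun v => v <+: u ∧ v ≠ u),
    t.filter_strictPrefix_eq_image_take hu, Finset.prod_image]
  · congr 1
    refine Finset.prod_congr rfl fun i hi => ?_
    have hout : (t.out (u.take i) : ℝ) ≠ 0 :=
      Nat.cast_ne_zero.2 (t.out_take_ne_zero hu (Finset.mem_range.1 hi))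
    field_simp
  · intro i hi j hj hij
    simpa [(Finset.mem_range.1 hi).le, (Finset.mem_range.1 hj).le] using congrArg List.length hij

theorem tsum_ofReal_cutKestenWeight (μ : ℕ → ℝ) {t : PlaneTree} {u : List ℕ}
    (hu : u ∈ t.verts) :
    ∑' k, ENNReal.ofReal (cutKestenWeight μ k t u) = ENNReal.ofReal (BGWweight μ t) := by
  rw [tsum_eq_single u.length fun k hk => by
    rw [cutKestenWeight_eq_zero fun h => hk h.2.symm, ENNReal.ofReal_zero],
    cutKestenWeight_length μ hu]

theorem ancLine_eq_ofFn {X : Type*} (t : PlaneTree) (x : {v // v ∈ t.verts} → X)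
    (v : {v // v ∈ t.verts}) :
    ancLine t x v = List.ofFn fun i : Fin (v.val.length + 1) =>
      (t.out (v.val.take i),
        x ⟨v.val.take i, t.prefix_closed v.val v.2 _ (List.take_prefix _ _)⟩) :=
  List.ext_get (by simp [ancLine]) fun n _ _ => by
    simp only [ancLine, List.get_eq_getElem, List.getElem_map, List.getElem_range,
      List.getElem_ofFn]

theorem measurable_ancLine (t : PlaneTree) (v : {v // v ∈ t.verts}) :
    Measurable fun x : {v // v ∈ t.verts} → E => ancLine t x v := by
  simp_rw [ancLine_eq_ofFn]
  exact measurable_list_ofFn (measurable_pi_lambda _ fun i =>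
    measurable_const.prodMk (measurable_pi_apply _))

theorem measurable_card_goodSet {PP : Set (List (ℕ × E))} (hPP : MeasurableSet PP)
    (t : PlaneTree) : Measurable fun x => (goodSet PP t x).card := by
  classical
  simp only [goodSet, Finset.card_filter]
  exact Finset.measurable_sum _ fun v _ =>
    Measurable.ite (measurable_ancLine t v hPP) measurable_const measurable_const

theorem lintegral_markedBGW (μ : ℕ → ℝ) (π : ℕ → Measure E)
    (hπ : ∀ k, IsProbabilityMeasure (π k))
    (f : (Σ t : PlaneTree, ({v // v ∈ t.verts} → E)) → ENNReal) :
    ∫⁻ m, f m ∂markedBGW μ π hπ =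
      ∑' t, ENNReal.ofReal (BGWweight μ t) * ∫⁻ x, f ⟨t, x⟩ ∂markProd π hπ t := by
  simp only [markedBGW, lintegral_sum_measure, lintegral_smul_measure, smul_eq_mul,
    (measurableEmbedding_sigmaMk _).lintegral_map]

theorem sum_markedCutKesten (μ : ℕ → ℝ) (π : ℕ → Measure E)
    (hπ : ∀ k, IsProbabilityMeasure (π k)) :
    Measure.sum (markedCutKesten μ π hπ) = Measure.sum fun t => ENNReal.ofReal (BGWweight μ t) •
      Measure.sum fun u : {v // v ∈ t.verts} =>
        (markProd π hπ t).map fun x =>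
          (⟨t, (x, u)⟩ : Σ t : PlaneTree, ({v // v ∈ t.verts} → E) × {v // v ∈ t.verts}) := by
  ext s hs
  simp only [markedCutKesten, Measure.sum_apply _ hs, Measure.smul_apply, smul_eq_mul]
  rw [ENNReal.tsum_comm, ENNReal.tsum_prod']
  refine tsum_congr fun t => ?_
  rw [tsum_eq_sum (s := t.verts) fun u hu => by simp [hu], ← Finset.sum_attach,
    ← ENNReal.tsum_mul_left, tsum_fintype, Finset.univ_eq_attach]
  refine Finset.sum_congr rfl fun u _ => ?_
  rw [ENNReal.tsum_mul_right, tsum_ofReal_cutKestenWeight μ u.2, dif_pos u.2]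

theorem lintegral_sum_markedCutKesten (μ : ℕ → ℝ) (π : ℕ → Measure E)
    (hπ : ∀ k, IsProbabilityMeasure (π k))
    (g : (Σ t : PlaneTree, ({v // v ∈ t.verts} → E) × {v // v ∈ t.verts}) → ENNReal) :
    ∑' k, ∫⁻ p, g p ∂markedCutKesten μ π hπ k =
      ∑' t, ENNReal.ofReal (BGWweight μ t) *
        ∑ u ∈ t.verts.attach, ∫⁻ x, g ⟨t, (x, u)⟩ ∂markProd π hπ t := by
  rw [← lintegral_sum_measure, sum_markedCutKesten]
  simp only [lintegral_sum_measure, lintegral_smul_measure, smul_eq_mul, tsum_fintype,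
    Finset.univ_eq_attach]
  refine tsum_congr fun t => congrArg (_ * ·) (Finset.sum_congr rfl fun u _ => ?_)
  exact ((measurableEmbedding_sigmaMk t).comp
    (measurableEmbedding_prod_mk_right u)).lintegral_map _

theorem spine_decomposition_marked_general
    (μ : ℕ → ℝ)
    (π : ℕ → Measure E) (hπ : ∀ k, IsProbabilityMeasure (π k))
    (PP : Set (List (ℕ × E))) (hPP : MeasurableSet PP)
    (F : (Σ t : PlaneTree, ({v // v ∈ t.verts} → E) × {v // v ∈ t.verts}) → ENNReal)
    (hF : Measurable F) :
    ∫⁻ m, (((goodSet PP m.1 m.2).card : ENNReal))⁻¹ *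
        ∑ u ∈ goodSet PP m.1 m.2, F ⟨m.1, (m.2, u)⟩ ∂(markedBGW μ π hπ) =
      ∑' k : ℕ, ∫⁻ p,
          (@ite ENNReal (ancLine p.1 p.2.1 p.2.2 ∈ PP) (Classical.dec _)
            (((goodSet PP p.1 p.2.1).card : ENNReal))⁻¹ 0) * F p
          ∂(markedCutKesten μ π hπ k) := by
  classical
  have hg : ∀ t u, Measurable fun x : {v // v ∈ t.verts} → E =>
      (@ite ENNReal (ancLine t x u ∈ PP) (Classical.dec _)
        (((goodSet PP t x).card : ENNReal))⁻¹ 0) * F ⟨t, (x, u)⟩ := fun t u =>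
    (Measurable.ite (measurable_ancLine t u hPP)
        ((measurable_from_nat (f := fun n : ℕ => (n : ENNReal)⁻¹)).comp
          (measurable_card_goodSet hPP t)) measurable_const).mul
      (hF.comp ((measurable_sigmaMk t).comp (measurable_id.prodMk measurable_const)))
  rw [lintegral_markedBGW, lintegral_sum_markedCutKesten]
  refine tsum_congr fun t => congrArg (_ * ·) ?_
  rw [← lintegral_finsetSum _ fun u _ => hg t u]
  refine lintegral_congr fun x => ?_
  rw [Finset.mul_sum, goodSet, Finset.sum_filter]
  refine Finset.sum_congr rfl fun u _ => ?_
  split_ifs <;> simp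

/-- spine decomposition for marked BGW trees. For every nonnegative
measurable `F` on marked pointed plane trees,
`E[F(T̃,U) 1{∃ v, A(T̃,v) ∈ PP}] = ∑_k E[F(T̃*_k,U*_k) 1{A(T̃*_k,U*_k) ∈ PP} / #good]`,
where `U` is conditionally uniform on the vertices with property `PP` (so the left side is
the integral of the average of `F` over the good vertices), and `(T̃*_k,U*_k)` is the
marked cut Kesten tree with spine of length `k`. -/
theorem spine_decomposition_marked
    (μ : ℕ → ℝ) (hμ0 : ∀ k, 0 ≤ μ k) (hμpmf : ∑' k, μ k = 1)
    (hcrit : ∑' k : ℕ, (k : ℝ) * μ k = 1) (hμ1 : μ 1 < 1)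
    (π : ℕ → Measure E) (hπ : ∀ k, IsProbabilityMeasure (π k))
    (PP : Set (List (ℕ × E))) (hPP : MeasurableSet PP)
    (F : (Σ t : PlaneTree, ({v // v ∈ t.verts} → E) × {v // v ∈ t.verts}) → ENNReal)
    (hF : Measurable F) :
    ∫⁻ m, (((goodSet PP m.1 m.2).card : ENNReal))⁻¹ *
        ∑ u ∈ goodSet PP m.1 m.2, F ⟨m.1, (m.2, u)⟩ ∂(markedBGW μ π hπ) =
      ∑' k : ℕ, ∫⁻ p,
          (@ite ENNReal (ancLine p.1 p.2.1 p.2.2 ∈ PP) (Classical.dec _)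
            (((goodSet PP p.1 p.2.1).card : ENNReal))⁻¹ 0) * F p
          ∂(markedCutKesten μ π hπ k) :=
  spine_decomposition_marked_general μ π hπ PP hPP F hF

end Spine
end

section
/- For integers k ≥ 0 and n ≥ 1, let c_n(k) := ∑_T (k+1)^{I(T)}, the sum running over all plane trees T with exactly n leaves and no vertex of outdegree 1, where I(T) is the number of vertices of T distinct from the root having outdegree ≥ 2 (this is a finite sum, since such a tree with n leaves has at most 2n−1 vertices). Then for every integer k ≥ 0, the formal power series F_k(z) := ∑_{n≥1} c_n(k) z^n with integer coefficients satisfies the quadratic equation (k+1)(k+2)·F_k(z)² − (1 + (2k²+4k+1)z)·F_k(z) + k(k+1)z² + z = 0. In particular c_1(k) = c_2(k) = 1, c_3(k) = 2(k+1)+1, and c_4(k) = 5(k+1)² + 5(k+1) + 1. -/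
open MeasureTheory Filter Set

namespace PlaneTree

open Classical in
/-- The number of leaves (vertices of outdegree `0`) of a plane tree. -/
noncomputable def numLeaves (T : PlaneTree) : ℕ :=
  (T.verts.filter fun v => T.out v = 0).card

open Classical in
/-- The number of non-root vertices of outdegree at least `2` of a plane tree. -/
noncomputable def numInternal (T : PlaneTree) : ℕ :=
  (T.verts.filter fun v => v ≠ [] ∧ 2 ≤ T.out v).card

end PlaneTree

open Classical in
/-- `c_n(k) = ∑_T (k+1)^{I(T)}`, the sum over plane trees with `n` leaves and no vertex of
outdegree `1`, where `I(T)` is the number of non-root vertices of outdegree `≥ 2`;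
computed in `ℕ∞` so that it is well defined without a finiteness proof. -/
noncomputable def treeCount (n k : ℕ) : ℕ∞ :=
  ∑' T : PlaneTree,
    if T.numLeaves = n ∧ ∀ v ∈ T.verts, T.out v ≠ 1
    then ((k : ℕ∞) + 1) ^ T.numInternal else 0

/-!
Plane trees are rose trees, a vertex being its path of child indices from the root. Let `A`,
`G`, `L` be the generating functions by number of leaves of trees without outdegree-one
vertices, weighted by `(k+1)` per non-root vertex of outdegree `≥ 2` (`A`), by `(k+1)` per vertex
of outdegree `≥ 2` (`G`), and of lists of such trees weighted like `G` (`L`). Splitting off the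
first child of a list, and the first two children of a tree that is not a leaf, gives
`L = 1 + G L`, `A = X + G (G L)` and `G = X + (k+1) G (G L)`. With `H = G L` these read
`A = X + G H`, `G = X + (k+1) G H`, `H = G + G H`; hence `G = (k+1) A - k X` and
`(A - X)(1 - G) = G²`, which is the quadratic equation. The same equations show by induction on
the degree that no coefficient is infinite.
-/

open PowerSeries Finset

/-! ### Generating functions with coefficients in `ℕ∞` -/

theorem ENat.summable {ι : Type*} (f : ι → ℕ∞) : Summable f :=
  ⟨_, hasSum_of_isLUB _ isLUB_iSup⟩

/-- Coefficients are taken in `ℕ∞`, where every family is summable. -/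
noncomputable def genFun {α : Type*} (size : α → ℕ) (w : α → ℕ∞) : PowerSeries ℕ∞ :=
  PowerSeries.mk fun n => ∑' a, if size a = n then w a else 0

section genFun

variable {α β : Type*}

theorem coeff_genFun (size : α → ℕ) (w : α → ℕ∞) (n : ℕ) :
    coeff n (genFun size w) = ∑' a, if size a = n then w a else 0 :=
  coeff_mk _ _

theorem genFun_congr_equiv (e : α ≃ β) {s : α → ℕ} {t : β → ℕ} {v : α → ℕ∞} {w : β → ℕ∞}
    (hs : ∀ a, t (e a) = s a) (hw : ∀ a, w (e a) = v a) : genFun s v = genFun t w := by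
  ext n
  simp only [coeff_genFun, ← e.tsum_eq, hs, hw]

theorem genFun_sumElim (s : α → ℕ) (t : β → ℕ) (v : α → ℕ∞) (w : β → ℕ∞) :
    genFun (Sum.elim s t) (Sum.elim v w) = genFun s v + genFun t w := by
  ext n
  simp only [coeff_genFun, map_add]
  exact Summable.tsum_sum (ENat.summable _) (ENat.summable _)

theorem genFun_const_mul (s : α → ℕ) (v : α → ℕ∞) (c : ℕ∞) :
    genFun s (fun a => c * v a) = C c * genFun s v := by
  ext n
  simp only [coeff_genFun, coeff_C_mul, ← (ENat.summable _).tsum_mul_left, mul_ite, mul_zero]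

theorem genFun_unit (m : ℕ) : genFun (fun _ : Unit => m) (fun _ => 1) = X ^ m := by
  ext n
  simp [coeff_genFun, coeff_X_pow, eq_comm]

theorem genFun_prod (s : α → ℕ) (t : β → ℕ) (v : α → ℕ∞) (w : β → ℕ∞) :
    genFun (fun p : α × β => s p.1 + t p.2) (fun p => v p.1 * w p.2) =
      genFun s v * genFun t w := by
  ext n
  have hsplit : ∀ p : α × β, (if s p.1 + t p.2 = n then v p.1 * w p.2 else 0) =
      ∑ ij ∈ antidiagonal n,
        (if s p.1 = ij.1 then v p.1 else 0) * (if t p.2 = ij.2 then w p.2 else 0) := by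
    intro p
    have hpair : ∀ ij : ℕ × ℕ, (s p.1 = ij.1 ∧ t p.2 = ij.2) ↔ (s p.1, t p.2) = ij :=
      fun ij => by rw [Prod.ext_iff]
    simp only [ite_zero_mul_ite_zero, hpair, Finset.sum_ite_eq, HasAntidiagonal.mem_antidiagonal]
  rw [coeff_mul, coeff_genFun, tsum_congr hsplit,
    Summable.tsum_finsetSum fun _ _ => ENat.summable _]
  refine Finset.sum_congr rfl fun ij _ => ?_
  rw [coeff_genFun, coeff_genFun,
    Summable.tsum_mul_tsum (ENat.summable _) (ENat.summable _) (ENat.summable _)]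

end genFun

theorem coeff_mul_ne_top {P Q : ℕ∞⟦X⟧} {n : ℕ} (hP : constantCoeff P = 0)
    (hQ : constantCoeff Q = 0) (hlt : ∀ m < n, coeff m P ≠ ⊤ ∧ coeff m Q ≠ ⊤) :
    coeff n (P * Q) ≠ ⊤ := by
  rw [coeff_mul, ENat.sum_ne_top]
  rintro ⟨i, j⟩ hij
  rw [HasAntidiagonal.mem_antidiagonal] at hij
  rcases Nat.eq_zero_or_pos i with rfl | hi
  · simp [hP]
  rcases Nat.eq_zero_or_pos j with rfl | hj
  · simp [hQ]
  exact WithTop.mul_ne_top (hlt i (by omega)).1 (hlt j (by omega)).2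

theorem coeff_X_ne_top (n : ℕ) : coeff n (X : ℕ∞⟦X⟧) ≠ ⊤ := by
  rw [coeff_X]
  split_ifs <;> simp

/-- As `G` and `H` have no constant term, the `n`-th coefficients of the right-hand sides only
involve lower coefficients of `G` and `H`. -/
theorem coeff_ne_top_of_decomposition {x : ℕ∞} (hx : x ≠ ⊤) {G H : ℕ∞⟦X⟧}
    (hG0 : constantCoeff G = 0) (hG : G = X + C x * (G * H)) (hH : H = G + G * H) (n : ℕ) :
    coeff n G ≠ ⊤ ∧ coeff n H ≠ ⊤ := by
  have hH0 : constantCoeff H = 0 := by rw [hH]; simp [hG0]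
  induction n using Nat.strong_induction_on with
  | _ n ih =>
    have hGH := coeff_mul_ne_top hG0 hH0 ih
    have hGn : coeff n G ≠ ⊤ := by
      rw [hG, map_add, coeff_C_mul]
      exact WithTop.add_ne_top.mpr ⟨coeff_X_ne_top n, WithTop.mul_ne_top hx hGH⟩
    refine ⟨hGn, ?_⟩
    rw [hH, map_add]
    exact WithTop.add_ne_top.mpr ⟨hGn, hGH⟩

theorem exists_map_natCast_eq {F : ℕ∞⟦X⟧} (hF : ∀ n, coeff n F ≠ ⊤) :
    ∃ F' : ℕ⟦X⟧, map (Nat.castRingHom ℕ∞) F' = F :=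
  ⟨mk fun n => (coeff n F).toNat, by ext n; simp [ENat.natCast_toNat (hF n)]⟩

theorem exists_int_decomposition {k : ℕ} {A G H : ℕ∞⟦X⟧} (hG0 : constantCoeff G = 0)
    (hA : A = X + G * H) (hG : G = X + C ((k : ℕ∞) + 1) * (G * H)) (hH : H = G + G * H) :
    ∃ G' H' : ℤ⟦X⟧, (mk fun n => ((coeff n A).toNat : ℤ)) = X + G' * H' ∧
      G' = X + C ((k : ℤ) + 1) * (G' * H') ∧ H' = G' + G' * H' := by
  have hfin := coeff_ne_top_of_decomposition (by simp) hG0 hG hH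
  obtain ⟨G, rfl⟩ := exists_map_natCast_eq fun n => (hfin n).1
  obtain ⟨H, rfl⟩ := exists_map_natCast_eq fun n => (hfin n).2
  have inj := map_injective (Nat.castRingHom ℕ∞) Nat.cast_injective
  replace hG : G = X + C (k + 1) * (G * H) := inj (by simpa using hG)
  replace hH : H = G + G * H := inj (by simpa using hH)
  refine ⟨map (Nat.castRingHom ℤ) G, map (Nat.castRingHom ℤ) H, ?_, ?_, ?_⟩
  · obtain rfl : A = map (Nat.castRingHom ℕ∞) (X + G * H) := by simp [hA]
    rw [← map_X (Nat.castRingHom ℤ), ← map_mul, ← map_add]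
    ext n
    simp only [coeff_mk, coeff_map, Nat.coe_castRingHom, ENat.toNat_natCast]
  · simpa using congrArg (PowerSeries.map (Nat.castRingHom ℤ)) hG
  · simpa using congrArg (PowerSeries.map (Nat.castRingHom ℤ)) hH

section Quadratic

variable {R : Type*} [CommRing R] (k : R)

theorem quadratic_of_decomposition {A G H : R⟦X⟧} (hA : A = X + G * H)
    (hG : G = X + C (k + 1) * (G * H)) (hH : H = G + G * H) :
    C ((k + 1) * (k + 2)) * A ^ 2 - (1 + C (2 * k ^ 2 + 4 * k + 1) * X) * A +
      C (k * (k + 1)) * X ^ 2 + X = 0 := by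
  simp only [map_add, map_mul, map_pow, map_one, map_ofNat] at hG ⊢
  have hGA : G = (C k + 1) * A - C k * X := by linear_combination hG - (C k + 1) * hA
  have hsq : (A - X) * (1 - G) = G ^ 2 := by linear_combination (1 - G) * hA + G * hH
  linear_combination -hsq + (X - A - G - ((C k + 1) * A - C k * X)) * hGA

theorem first_coeffs_of_quadratic {F : R⟦X⟧} (h0 : constantCoeff F = 0)
    (hF : C ((k + 1) * (k + 2)) * F ^ 2 - (1 + C (2 * k ^ 2 + 4 * k + 1) * X) * F +
      C (k * (k + 1)) * X ^ 2 + X = 0) :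
    coeff 1 F = 1 ∧ coeff 2 F = 1 ∧ coeff 3 F = 2 * (k + 1) + 1 ∧
      coeff 4 F = 5 * (k + 1) ^ 2 + 5 * (k + 1) + 1 := by
  have hc (n : ℕ) := congrArg (coeff n) hF
  rw [← coeff_zero_eq_constantCoeff_apply] at h0
  have h1 := hc 1
  have h2 := hc 2
  have h3 := hc 3
  have h4 := hc 4
  simp only [map_mul, map_add, map_one, pow_two, map_sub, coeff_mul, coeff_one,
    Finset.Nat.sum_antidiagonal_succ, HasAntidiagonal.antidiagonal_zero, Finset.sum_singleton,
    coeff_zero_C, ↓reduceIte, zero_add, h0, zero_mul, mul_zero, add_zero, coeff_succ_C,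
    Nat.add_eq_zero_iff, one_ne_zero, and_false, Finset.sum_const_zero, coeff_X, mul_ite, mul_one,
    zero_ne_one, one_mul, Nat.add_eq_right, ite_self, ite_mul, zero_sub, map_zero, Nat.reduceAdd,
    OfNat.ofNat_ne_one] at h1 h2 h3 h4
  have e1 : coeff 1 F = 1 := by linear_combination -h1
  rw [e1] at h2 h3 h4
  have e2 : coeff 2 F = 1 := by linear_combination -h2
  rw [e2] at h3 h4
  have e3 : coeff 3 F = 2 * (k + 1) + 1 := by linear_combination -h3
  rw [e3] at h4
  exact ⟨e1, e2, e3, by linear_combination -h4⟩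

end Quadratic

/-! ### Rose trees as plane trees -/

inductive RoseTree : Type
  | node : List RoseTree → RoseTree

namespace RoseTree

theorem ind {P : RoseTree → Prop} (h : ∀ l, (∀ t ∈ l, P t) → P (node l)) : ∀ t, P t
  | node l => h l fun t _ => ind h t
decreasing_by have := List.sizeOf_lt_of_mem ‹t ∈ l›; simp only [node.sizeOf_spec]; omega

def countOutdeg (p : ℕ → Prop) [DecidablePred p] : RoseTree → ℕ
  | node l => (if p l.length then 1 else 0) + (l.map (countOutdeg p)).sum

def leaves : RoseTree → ℕ := countOutdeg (· = 0)

def branching : RoseTree → ℕ := countOutdeg (2 ≤ ·)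

def internal : RoseTree → ℕ
  | node l => (l.map branching).sum

def Good (t : RoseTree) : Prop := countOutdeg (· = 1) t = 0

theorem one_le_leaves (t : RoseTree) : 1 ≤ t.leaves := by
  induction t using ind with
  | h l ih =>
    cases l with
    | nil => simp [leaves, countOutdeg]
    | cons t ts =>
      have := ih t List.mem_cons_self
      simp only [leaves, countOutdeg, List.map_cons, List.sum_cons] at this ⊢
      omega

theorem good_node {l : List RoseTree} : Good (node l) ↔ l.length ≠ 1 ∧ ∀ t ∈ l, Good t := by
  simp [Good, countOutdeg, List.sum_eq_zero_iff]

def verts : RoseTree → Finset (List ℕ)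
  | node l => insert [] (Finset.univ.biUnion fun i : Fin l.length =>
      (verts l[i.1]).map ⟨fun q => (i.1 + 1) :: q, List.cons_injective⟩)
decreasing_by
  have := List.sizeOf_lt_of_mem (List.getElem_mem i.2); simp only [node.sizeOf_spec]; omega

theorem nil_mem_verts (t : RoseTree) : [] ∈ t.verts := by
  cases t; simp [verts]

theorem cons_mem_verts_node {j : ℕ} {q : List ℕ} {l : List RoseTree} :
    j :: q ∈ (node l).verts ↔ ∃ i, ∃ h : i < l.length, j = i + 1 ∧ q ∈ l[i].verts := by
  simp only [verts, Finset.mem_insert, reduceCtorEq, false_or, Finset.mem_biUnion, Finset.mem_univ,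
    true_and, Finset.mem_map, Function.Embedding.coeFn_mk, List.cons.injEq]
  constructor
  · rintro ⟨i, q', hq', rfl, rfl⟩
    exact ⟨i, i.2, rfl, hq'⟩
  · rintro ⟨i, hi, rfl, hq⟩
    exact ⟨⟨i, hi⟩, q, hq, rfl, rfl⟩

theorem succ_cons_mem_verts_node {i : ℕ} {q : List ℕ} {l : List RoseTree} :
    (i + 1) :: q ∈ (node l).verts ↔ ∃ h : i < l.length, q ∈ l[i].verts := by
  simp [cons_mem_verts_node]

theorem singleton_mem_verts_node {j : ℕ} {l : List RoseTree} :
    [j] ∈ (node l).verts ↔ 1 ≤ j ∧ j ≤ l.length := by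
  rw [cons_mem_verts_node]
  constructor
  · rintro ⟨i, hi, rfl, -⟩
    omega
  · rintro ⟨h1, h2⟩
    exact ⟨j - 1, by omega, by omega, nil_mem_verts _⟩

theorem verts_prefix_closed (t : RoseTree) : ∀ v ∈ t.verts, ∀ u, u <+: v → u ∈ t.verts := by
  induction t using ind with
  | h l ih =>
    rintro (_ | ⟨j, q⟩) hv u hu
    · rw [List.prefix_nil.mp hu]
      exact nil_mem_verts _
    · obtain ⟨i, hi, rfl, hq⟩ := cons_mem_verts_node.mp hv
      rcases u with _ | ⟨j', u⟩
      · exact nil_mem_verts _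
      · obtain ⟨rfl, hu'⟩ := List.cons_prefix_cons.mp hu
        exact succ_cons_mem_verts_node.mpr ⟨hi, ih _ (List.getElem_mem hi) q hq u hu'⟩

theorem verts_children (t : RoseTree) :
    ∀ v ∈ t.verts, ∃ d, ∀ j, v ++ [j] ∈ t.verts ↔ 1 ≤ j ∧ j ≤ d := by
  induction t using ind with
  | h l ih =>
    rintro (_ | ⟨j, q⟩) hv
    · exact ⟨l.length, fun j => singleton_mem_verts_node⟩
    · obtain ⟨i, hi, rfl, hq⟩ := cons_mem_verts_node.mp hv
      obtain ⟨d, hd⟩ := ih _ (List.getElem_mem hi) q hq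
      refine ⟨d, fun j => ?_⟩
      rw [List.cons_append, succ_cons_mem_verts_node, ← hd]
      exact ⟨fun ⟨_, h⟩ => h, fun h => ⟨hi, h⟩⟩

def toPlaneTree (t : RoseTree) : PlaneTree :=
  ⟨t.verts, t.nil_mem_verts, t.verts_prefix_closed, t.verts_children⟩

end RoseTree

namespace PlaneTree

theorem ext {P Q : PlaneTree} (h : P.verts = Q.verts) : P = Q := by
  cases P; cases Q; cases h; rfl

theorem out_eq_of_forall_mem_iff (P : PlaneTree) {v : List ℕ} {d : ℕ}
    (h : ∀ i, v ++ [i] ∈ P.verts ↔ 1 ≤ i ∧ i ≤ d) : P.out v = d := by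
  classical
  have hchildren : (P.verts.filter fun w => ∃ i, w = v ++ [i]) =
      (Finset.Icc 1 d).map ⟨fun i => v ++ [i], fun a b hab => by simpa using hab⟩ := by
    ext w
    simp only [Finset.mem_filter, Finset.mem_map, Finset.mem_Icc]
    constructor
    · rintro ⟨hw, i, rfl⟩
      exact ⟨i, (h i).mp hw, rfl⟩
    · rintro ⟨i, hi, rfl⟩
      exact ⟨(h i).mpr hi, i, rfl⟩
  rw [out, hchildren]
  simp

theorem append_singleton_mem_iff (P : PlaneTree) {v : List ℕ} (hv : v ∈ P.verts) (i : ℕ) :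
    v ++ [i] ∈ P.verts ↔ 1 ≤ i ∧ i ≤ P.out v := by
  obtain ⟨d, hd⟩ := P.children v hv
  rw [P.out_eq_of_forall_mem_iff hd, hd]

noncomputable def child (P : PlaneTree) (i : ℕ) (hi : [i] ∈ P.verts) : PlaneTree where
  verts := P.verts.preimage (i :: ·) List.cons_injective.injOn
  root_mem := by simpa using hi
  prefix_closed v hv u hu := by
    simp only [Finset.mem_preimage] at hv ⊢
    exact P.prefix_closed _ hv _ (List.cons_prefix_cons.mpr ⟨rfl, hu⟩)
  children v hv := by
    simp only [Finset.mem_preimage] at hv ⊢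
    exact P.children _ hv

theorem mem_child_verts {P : PlaneTree} {i : ℕ} {hi : [i] ∈ P.verts} {q : List ℕ} :
    q ∈ (P.child i hi).verts ↔ i :: q ∈ P.verts := by
  simp [child]

theorem card_child_verts_lt (P : PlaneTree) (i : ℕ) (hi : [i] ∈ P.verts) :
    (P.child i hi).verts.card < P.verts.card := by
  have hsub : (P.child i hi).verts.map ⟨(i :: ·), List.cons_injective⟩ ⊆ P.verts.erase [] := by
    intro w hw
    obtain ⟨q, hq, rfl⟩ := Finset.mem_map.mp hw
    exact Finset.mem_erase.mpr ⟨List.cons_ne_nil _ _, mem_child_verts.mp hq⟩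
  have := Finset.card_le_card hsub
  rw [Finset.card_map, Finset.card_erase_of_mem P.root_mem] at this
  have := Finset.card_pos.mpr ⟨_, P.root_mem⟩
  omega

end PlaneTree

namespace RoseTree

@[simp]
theorem verts_toPlaneTree (t : RoseTree) : t.toPlaneTree.verts = t.verts := rfl

theorem out_toPlaneTree_node_nil (l : List RoseTree) : (node l).toPlaneTree.out [] = l.length :=
  PlaneTree.out_eq_of_forall_mem_iff _ fun _ => singleton_mem_verts_node

theorem out_toPlaneTree_node_cons {l : List RoseTree} {i : ℕ} (hi : i < l.length) {q : List ℕ}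
    (hq : q ∈ l[i].verts) : (node l).toPlaneTree.out ((i + 1) :: q) = l[i].toPlaneTree.out q := by
  refine PlaneTree.out_eq_of_forall_mem_iff _ fun j => ?_
  rw [← l[i].toPlaneTree.append_singleton_mem_iff hq, verts_toPlaneTree, verts_toPlaneTree,
    List.cons_append, succ_cons_mem_verts_node]
  exact ⟨fun ⟨_, h⟩ => h, fun h => ⟨hi, h⟩⟩

theorem card_filter_verts_node (l : List RoseTree) (q : List ℕ → Prop) [DecidablePred q] :
    ((node l).verts.filter q).card =
      (if q [] then 1 else 0) +
        ∑ i : Fin l.length, (l[i.1].verts.filter (q <| (i.1 + 1) :: ·)).card := by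
  have hdisj : Set.PairwiseDisjoint (↑(Finset.univ : Finset (Fin l.length))) fun i : Fin l.length =>
      (verts l[i.1]).map ⟨fun q => (i.1 + 1) :: q, List.cons_injective⟩ := by
    intro i _ j _ hij
    refine Finset.disjoint_left.mpr fun v hvi hvj => hij ?_
    obtain ⟨a, -, rfl⟩ := Finset.mem_map.mp hvi
    obtain ⟨b, -, hb⟩ := Finset.mem_map.mp hvj
    exact Fin.ext (by simpa using (List.cons.inj hb).1.symm)
  have hnil : [] ∉ Finset.univ.biUnion fun i : Fin l.length =>
      (verts l[i.1]).map ⟨fun q => (i.1 + 1) :: q, List.cons_injective⟩ := by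
    simp
  simp only [Finset.card_filter]
  rw [verts, Finset.sum_insert hnil, Finset.sum_biUnion hdisj]
  simp only [Finset.sum_map, Function.Embedding.coeFn_mk]

theorem card_filter_out_toPlaneTree (p : ℕ → Prop) [DecidablePred p] (t : RoseTree) :
    (t.verts.filter fun v => p (t.toPlaneTree.out v)).card = t.countOutdeg p := by
  induction t using ind with
  | h l ih =>
    rw [card_filter_verts_node, out_toPlaneTree_node_nil, countOutdeg, ← List.ofFn_getElem_eq_map,
      List.sum_ofFn]
    congr 1
    refine Finset.sum_congr rfl fun i _ => ?_
    rw [← ih _ (List.getElem_mem i.2)]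
    exact congrArg Finset.card
      (Finset.filter_congr fun q hq => by rw [out_toPlaneTree_node_cons i.2 hq])

theorem numLeaves_toPlaneTree (t : RoseTree) : t.toPlaneTree.numLeaves = t.leaves := by
  rw [PlaneTree.numLeaves]
  convert card_filter_out_toPlaneTree (· = 0) t using 2 <;> rfl

theorem numInternal_toPlaneTree (t : RoseTree) : t.toPlaneTree.numInternal = t.internal := by
  obtain ⟨l⟩ := t
  rw [PlaneTree.numInternal, internal, verts_toPlaneTree, card_filter_verts_node,
    ← List.ofFn_getElem_eq_map, List.sum_ofFn, if_neg fun h => h.1 rfl, zero_add]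
  simp only [ne_eq, reduceCtorEq, not_false_eq_true, true_and]
  refine Finset.sum_congr rfl fun i _ => ?_
  rw [branching, ← card_filter_out_toPlaneTree]
  exact congrArg Finset.card
    (Finset.filter_congr fun q hq => by rw [out_toPlaneTree_node_cons i.2 hq])

theorem forall_out_ne_one_iff_good (t : RoseTree) :
    (∀ v ∈ t.toPlaneTree.verts, t.toPlaneTree.out v ≠ 1) ↔ t.Good := by
  rw [Good, ← card_filter_out_toPlaneTree, Finset.card_eq_zero, Finset.filter_eq_empty_iff,
    verts_toPlaneTree]

theorem toPlaneTree_injective : Function.Injective toPlaneTree := by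
  intro t
  induction t using ind with
  | h l ih =>
    rintro ⟨m⟩ hlm
    have hlen : l.length = m.length := by
      rw [← out_toPlaneTree_node_nil, ← out_toPlaneTree_node_nil, hlm]
    have hverts (i : ℕ) (hl : i < l.length) (hm : i < m.length) : l[i].verts = m[i].verts := by
      ext q
      have := Finset.ext_iff.mp (congrArg PlaneTree.verts hlm) ((i + 1) :: q)
      simpa only [verts_toPlaneTree, succ_cons_mem_verts_node, hl, hm, exists_true_left] using this
    congr 1
    exact List.ext_getElem hlen fun i hl hm =>
      ih _ (List.getElem_mem hl) (PlaneTree.ext (hverts i hl hm))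

theorem exists_toPlaneTree_eq (P : PlaneTree) : ∃ t, toPlaneTree t = P := by
  have hchild (i : Fin (P.out [])) : [i.1 + 1] ∈ P.verts :=
    (P.append_singleton_mem_iff P.root_mem _).mpr ⟨by omega, i.2⟩
  choose t ht using fun i => exists_toPlaneTree_eq (P.child _ (hchild i))
  have hfirst {j : ℕ} {q : List ℕ} (h : j :: q ∈ P.verts) : 1 ≤ j ∧ j ≤ P.out [] :=
    (P.append_singleton_mem_iff P.root_mem j).mp (P.prefix_closed _ h _ ⟨q, rfl⟩)
  refine ⟨node (List.ofFn t), PlaneTree.ext (Finset.ext fun v => ?_)⟩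
  rcases v with _ | ⟨_ | i, q⟩
  · simp only [verts_toPlaneTree, nil_mem_verts, P.root_mem]
  · refine iff_of_false (by simp [cons_mem_verts_node]) fun h => ?_
    have := (hfirst h).1
    omega
  · rw [verts_toPlaneTree, succ_cons_mem_verts_node]
    constructor
    · rintro ⟨hi, hq⟩
      rw [List.getElem_ofFn, ← verts_toPlaneTree, ht] at hq
      exact PlaneTree.mem_child_verts.mp hq
    · intro h
      have hi : i < P.out [] := by have := (hfirst h).2; omega
      refine ⟨by rwa [List.length_ofFn], ?_⟩
      rw [List.getElem_ofFn, ← verts_toPlaneTree, ht]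
      exact PlaneTree.mem_child_verts.mpr h
termination_by P.verts.card
decreasing_by all_goals exact P.card_child_verts_lt _ _

theorem toPlaneTree_bijective : Function.Bijective toPlaneTree :=
  ⟨toPlaneTree_injective, exists_toPlaneTree_eq⟩

end RoseTree

/-! ### Decomposing trees without vertices of outdegree one -/

def Equiv.listEquivUnitSum (α : Type*) : List α ≃ Unit ⊕ α × List α where
  toFun
    | [] => .inl ()
    | a :: l => .inr (a, l)
  invFun
    | .inl _ => []
    | .inr (a, l) => a :: l
  left_inv l := by cases l <;> rfl
  right_inv s := by rcases s with _ | ⟨a, l⟩ <;> rfl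

namespace RoseTree

abbrev GoodTree : Type := {t : RoseTree // t.Good}

theorem good_node_cons_cons (t s : GoodTree) (ts : List GoodTree) :
    Good (node (t.1 :: s.1 :: ts.map Subtype.val)) := by
  refine good_node.mpr ⟨by simp, ?_⟩
  simp only [List.mem_cons, List.mem_map]
  rintro _ (rfl | rfl | ⟨u, -, rfl⟩)
  exacts [t.2, s.2, u.2]

def GoodTree.assemble : Unit ⊕ GoodTree × GoodTree × List GoodTree → GoodTree
  | .inl _ => ⟨node [], good_node.mpr ⟨by simp, by simp⟩⟩
  | .inr (t, s, ts) => ⟨node (t.1 :: s.1 :: ts.map Subtype.val), good_node_cons_cons t s ts⟩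

theorem GoodTree.assemble_bijective : Function.Bijective GoodTree.assemble := by
  constructor
  · rintro (_ | ⟨t, s, ts⟩) (_ | ⟨t', s', ts'⟩) h <;>
      simp only [assemble, Subtype.mk.injEq, node.injEq, reduceCtorEq, List.cons.injEq] at h
    · rfl
    · obtain ⟨h1, h2, h3⟩ := h
      rw [Subtype.ext h1, Subtype.ext h2, List.map_injective_iff.mpr Subtype.val_injective h3]
  · rintro ⟨⟨l⟩, hl⟩
    obtain ⟨hlen, hgood⟩ := good_node.mp hl
    match l, hlen, hgood with
    | [], _, _ => exact ⟨.inl (), rfl⟩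
    | [_], hlen, _ => exact absurd rfl hlen
    | t :: s :: ts, _, hgood =>
      have hts : ∀ u ∈ ts, u.Good := fun u hu => hgood u (by simp [hu])
      lift ts to List GoodTree using hts
      exact ⟨.inr (⟨t, hgood t (by simp)⟩, ⟨s, hgood s (by simp)⟩, ts), rfl⟩

def forestLeaves (ts : List GoodTree) : ℕ := (ts.map fun t => t.1.leaves).sum

def forestBranching (ts : List GoodTree) : ℕ := (ts.map fun t => t.1.branching).sum

theorem leaves_assemble (a : Unit ⊕ GoodTree × GoodTree × List GoodTree) :
    (GoodTree.assemble a).1.leaves =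
      Sum.elim (fun _ => 1) (fun p => p.1.1.leaves + (p.2.1.1.leaves + forestLeaves p.2.2)) a := by
  rcases a with _ | ⟨t, s, ts⟩ <;>
    simp [GoodTree.assemble, leaves, countOutdeg, forestLeaves]

theorem internal_assemble (t s : GoodTree) (ts : List GoodTree) :
    (GoodTree.assemble (.inr (t, s, ts))).1.internal =
      t.1.branching + (s.1.branching + forestBranching ts) := by
  simp [GoodTree.assemble, internal, forestBranching]

theorem branching_assemble (t s : GoodTree) (ts : List GoodTree) :
    (GoodTree.assemble (.inr (t, s, ts))).1.branching =
      1 + (t.1.branching + (s.1.branching + forestBranching ts)) := by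
  simp [GoodTree.assemble, branching, countOutdeg, forestBranching]

variable (x : ℕ∞)

noncomputable def treeGF : ℕ∞⟦X⟧ :=
  genFun (fun t : GoodTree => t.1.leaves) fun t => x ^ t.1.internal

/-- Here the root also counts: this is the weight a tree carries once it hangs below a vertex. -/
noncomputable def subtreeGF : ℕ∞⟦X⟧ :=
  genFun (fun t : GoodTree => t.1.leaves) fun t => x ^ t.1.branching

noncomputable def forestGF : ℕ∞⟦X⟧ :=
  genFun forestLeaves fun ts => x ^ forestBranching ts

theorem forestGF_eq : forestGF x = 1 + subtreeGF x * forestGF x := by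
  rw [subtreeGF, forestGF, ← genFun_prod, ← pow_zero (X : ℕ∞⟦X⟧), ← genFun_unit, ← genFun_sumElim]
  refine genFun_congr_equiv (Equiv.listEquivUnitSum GoodTree) ?_ ?_ <;>
    rintro (_ | ⟨t, ts⟩) <;> simp [Equiv.listEquivUnitSum, forestLeaves, forestBranching, pow_add]

theorem treeGF_eq : treeGF x = X + subtreeGF x * (subtreeGF x * forestGF x) := by
  rw [treeGF, subtreeGF, forestGF, ← genFun_prod, ← genFun_prod, ← pow_one (X : ℕ∞⟦X⟧),
    ← genFun_unit, ← genFun_sumElim]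
  refine (genFun_congr_equiv (Equiv.ofBijective _ GoodTree.assemble_bijective)
    leaves_assemble ?_).symm
  rintro (_ | ⟨t, s, ts⟩)
  · simp [GoodTree.assemble, internal]
  · simp [internal_assemble, pow_add]

theorem subtreeGF_eq : subtreeGF x = X + C x * (subtreeGF x * (subtreeGF x * forestGF x)) := by
  rw [subtreeGF, forestGF, ← genFun_prod, ← genFun_prod, ← genFun_const_mul,
    ← pow_one (X : ℕ∞⟦X⟧), ← genFun_unit, ← genFun_sumElim]
  refine (genFun_congr_equiv (Equiv.ofBijective _ GoodTree.assemble_bijective)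
    leaves_assemble ?_).symm
  rintro (_ | ⟨t, s, ts⟩)
  · simp [GoodTree.assemble, branching, countOutdeg]
  · simp [branching_assemble, pow_add]

theorem constantCoeff_subtreeGF : constantCoeff (subtreeGF x) = 0 := by
  rw [← coeff_zero_eq_constantCoeff_apply, subtreeGF, coeff_genFun]
  simp [fun t : RoseTree => Nat.one_le_iff_ne_zero.mp t.one_le_leaves]

theorem treeCount_eq_coeff_treeGF (n k : ℕ) : treeCount n k = coeff n (treeGF ((k : ℕ∞) + 1)) := by
  classical
  rw [treeCount, ← (Equiv.ofBijective _ toPlaneTree_bijective).tsum_eq, treeGF, coeff_genFun]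
  refine (tsum_congr fun t => ?_).trans (_root_.tsum_subtype {t : RoseTree | t.Good}
    fun t => if t.leaves = n then ((k : ℕ∞) + 1) ^ t.internal else 0).symm
  rw [Equiv.ofBijective_apply]
  simp only [numLeaves_toPlaneTree, numInternal_toPlaneTree,
    forall_out_ne_one_iff_good, Set.indicator_apply, Set.mem_ofPred_eq]
  by_cases h : t.Good <;> simp [h]

theorem constantCoeff_treeGF : constantCoeff (treeGF x) = 0 := by
  rw [treeGF_eq]
  simp [constantCoeff_subtreeGF]

theorem subtreeGF_mul_forestGF : subtreeGF x * forestGF x =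
    subtreeGF x + subtreeGF x * (subtreeGF x * forestGF x) := by
  conv_lhs => rw [forestGF_eq]
  ring

theorem coeff_treeGF_ne_top {x : ℕ∞} (hx : x ≠ ⊤) (n : ℕ) : coeff n (treeGF x) ≠ ⊤ := by
  have hfin := coeff_ne_top_of_decomposition hx (constantCoeff_subtreeGF x) (subtreeGF_eq x)
    (subtreeGF_mul_forestGF x) n
  rw [subtreeGF_mul_forestGF, map_add] at hfin
  rw [treeGF_eq, map_add]
  exact WithTop.add_ne_top.mpr ⟨coeff_X_ne_top n, (WithTop.add_ne_top.mp hfin.2).2⟩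

end RoseTree

noncomputable def treeCountSeries (k : ℕ) : ℤ⟦X⟧ :=
  mk fun n => if n = 0 then 0 else ((treeCount n k).toNat : ℤ)

theorem treeCount_ne_top (n k : ℕ) : treeCount n k ≠ ⊤ := by
  rw [RoseTree.treeCount_eq_coeff_treeGF]
  exact RoseTree.coeff_treeGF_ne_top (by simp) n

theorem treeCountSeries_eq (k : ℕ) :
    treeCountSeries k = mk fun n => ((coeff n (RoseTree.treeGF ((k : ℕ∞) + 1))).toNat : ℤ) := by
  ext n
  rcases n with _ | n
  · simp [treeCountSeries, RoseTree.constantCoeff_treeGF]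
  · simp [treeCountSeries, RoseTree.treeCount_eq_coeff_treeGF]

theorem treeCountSeries_quadratic (k : ℕ) :
    C (((k : ℤ) + 1) * ((k : ℤ) + 2)) * treeCountSeries k ^ 2 -
        (1 + C (2 * (k : ℤ) ^ 2 + 4 * (k : ℤ) + 1) * X) * treeCountSeries k +
        C ((k : ℤ) * ((k : ℤ) + 1)) * X ^ 2 + X = 0 := by
  obtain ⟨G, H, hA, hG, hH⟩ := exists_int_decomposition (RoseTree.constantCoeff_subtreeGF _)
    (RoseTree.treeGF_eq _) (RoseTree.subtreeGF_eq _)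
    (RoseTree.subtreeGF_mul_forestGF ((k : ℕ∞) + 1))
  rw [treeCountSeries_eq, hA]
  exact quadratic_of_decomposition _ rfl hG hH

/-- The counts `c_n(k)` are finite, the generating function
`F_k(z) = ∑_{n≥1} c_n(k) z^n ∈ ℤ⟦z⟧` satisfies
`(k+1)(k+2) F_k² − (1+(2k²+4k+1)z) F_k + k(k+1)z² + z = 0`, and
`c_1(k) = c_2(k) = 1`, `c_3(k) = 2(k+1)+1`, `c_4(k) = 5(k+1)²+5(k+1)+1`. -/
theorem treeCount_generating_function :
    (∀ n k : ℕ, 1 ≤ n → treeCount n k ≠ ⊤) ∧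
    (∀ k : ℕ,
      letI F : PowerSeries ℤ :=
        PowerSeries.mk fun n => if n = 0 then 0 else ((treeCount n k).toNat : ℤ)
      PowerSeries.C (((k : ℤ) + 1) * ((k : ℤ) + 2)) * F ^ 2 -
          (1 + PowerSeries.C (2 * (k : ℤ) ^ 2 + 4 * (k : ℤ) + 1) * PowerSeries.X) * F +
          PowerSeries.C ((k : ℤ) * ((k : ℤ) + 1)) * PowerSeries.X ^ 2 +
          PowerSeries.X = 0) ∧
    (∀ k : ℕ, treeCount 1 k = 1 ∧ treeCount 2 k = 1 ∧
      treeCount 3 k = 2 * ((k : ℕ∞) + 1) + 1 ∧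
      treeCount 4 k = 5 * ((k : ℕ∞) + 1) ^ 2 + 5 * ((k : ℕ∞) + 1) + 1) := by
  refine ⟨fun n k _ => treeCount_ne_top n k, treeCountSeries_quadratic, fun k => ?_⟩
  obtain ⟨h1, h2, h3, h4⟩ :=
    first_coeffs_of_quadratic (k : ℤ) (by simp [treeCountSeries]) (treeCountSeries_quadratic k)
  have hval {n : ℕ} (hn : n ≠ 0) {m : ℕ} (h : coeff n (treeCountSeries k) = m) :
      treeCount n k = m := by
    rw [← ENat.natCast_toNat (treeCount_ne_top n k)]
    simp only [treeCountSeries, coeff_mk, hn, if_false] at h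
    exact_mod_cast h
  refine ⟨hval one_ne_zero (by simpa using h1), hval two_ne_zero (by simpa using h2), ?_, ?_⟩
  · exact_mod_cast hval three_ne_zero (m := 2 * (k + 1) + 1) (by push_cast; exact h3)
  · exact_mod_cast
      hval four_ne_zero (m := 5 * (k + 1) ^ 2 + 5 * (k + 1) + 1) (by push_cast; exact h4)
end

section
/- Let T be a plane tree and, for each v ∈ T, let (B_v, d_v) be a metric space with a distinguished point ρ_v ∈ B_v (the inner root) and a map ℓ_v : {1,…,out_T(v)} → B_v (the outer roots). Then the function d* defined on the disjoint union ⊔_{v∈T} B_v by the branching formulas below is a pseudometric: d* is nonnegative, vanishes on the diagonal, is symmetric, and satisfies the triangle inequality d*(x,z) ≤ d*(x,y) + d*(y,z) for all x, y, z ∈ ⊔_{v∈T} B_v. -/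
open MeasureTheory Filter Set

section Decorated

variable {B : List ℕ → Type*} [∀ v, MetricSpace (B v)]

/-- `Z_w^x`: the projection of a point `x` of the decorated tree to the decoration `B_w`
of an ancestor vertex `w`: `x` itself if `w = v(x)`, and otherwise the outer root
`ℓ_w(i)` of `B_w`, where `wi` is the child of `w` towards `v(x)`. -/
noncomputable def Zpt (ℓ : ∀ v : List ℕ, ℕ → B v) (x : Σ v : List ℕ, B v)
    (w : List ℕ) : B w :=
  if h : w = x.1 then cast (congrArg B h.symm) x.2 else ℓ w (x.1.getD w.length 0)

/-- The sum `∑_{w ≺ u ⪯ v(x)} d_u(ρ_u, Z_u^x)` of root-to-projection distances in the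
decorations strictly between a vertex `w` and the vertex of `x`. -/
noncomputable def dAnc (ρ : ∀ v : List ℕ, B v) (ℓ : ∀ v : List ℕ, ℕ → B v)
    (w : List ℕ) (x : Σ v : List ℕ, B v) : ℝ :=
  ∑ i ∈ Finset.Icc (w.length + 1) (x.1.length),
    dist (ρ (x.1.take i)) (Zpt ℓ x (x.1.take i))

/-- Longest common prefix of two lists. -/
def lcp : List ℕ → List ℕ → List ℕ
  | a :: as, b :: bs => if a = b then a :: lcp as bs else []
  | _, _ => []

open Classical in
/-- The pseudometric `d*` of the discrete decorated tree, on the disjoint union of the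
decorations: the branching formulas of the paper. -/
noncomputable def dstar (ρ : ∀ v : List ℕ, B v) (ℓ : ∀ v : List ℕ, ℕ → B v)
    (x y : Σ v : List ℕ, B v) : ℝ :=
  if x.1 <+: y.1 then dist x.2 (Zpt ℓ y x.1) + dAnc ρ ℓ x.1 y
  else if y.1 <+: x.1 then dist y.2 (Zpt ℓ x y.1) + dAnc ρ ℓ y.1 x
  else
    dist (Zpt ℓ x (lcp x.1 y.1)) (Zpt ℓ y (lcp x.1 y.1)) +
      dAnc ρ ℓ (lcp x.1 y.1) x + dAnc ρ ℓ (lcp x.1 y.1) y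

/-! Whatever the branch, `d*(x, y) = d_L(Z_L^x, Z_L^y) + h_L(x) + h_L(y)` with `L = v(x) ∧ v(y)`
and `h_w(x) = dAnc ρ ℓ w x` the distance from the inner root of the child of `w` towards `x` down
to `x`. The prefixes `v(x) ∧ v(y)` and `v(y) ∧ v(z)` of `v(y)` are comparable; by symmetry let
`L = v(x) ∧ v(y)` be the shorter one, so that `L` is also a common ancestor of `v(x)` and `v(z)`.
Evaluating the formula at a common ancestor only overestimates `d*(x, z)` (by the detour through
the inner root of `v(x) ∧ v(z)`), and `d_L(Z_L^y, Z_L^z) + h_L(z) ≤ h_L(y) + d*(y, z)` since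
`L ⪯ v(y) ∧ v(z)`; the triangle inequality in `B_L` joins the two estimates. -/

theorem prefix_lcp_iff {w : List ℕ} : ∀ {a b : List ℕ}, w <+: lcp a b ↔ w <+: a ∧ w <+: b := by
  induction w with
  | nil => simp
  | cons c w ih =>
    rintro (_ | ⟨x, a⟩) (_ | ⟨y, b⟩)
    any_goals simp [lcp]
    split_ifs with hxy
    · simp [hxy, ih, and_and_and_comm]
    · grind

theorem lcp_prefix_left (a b : List ℕ) : lcp a b <+: a :=
  (prefix_lcp_iff.1 (List.prefix_refl _)).1

theorem lcp_prefix_right (a b : List ℕ) : lcp a b <+: b :=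
  (prefix_lcp_iff.1 (List.prefix_refl _)).2

theorem prefix_lcp {w a b : List ℕ} (ha : w <+: a) (hb : w <+: b) : w <+: lcp a b :=
  prefix_lcp_iff.2 ⟨ha, hb⟩

theorem lcp_comm (a b : List ℕ) : lcp a b = lcp b a :=
  (prefix_lcp (lcp_prefix_right a b) (lcp_prefix_left a b)).eq_of_length_le
    (prefix_lcp (lcp_prefix_right b a) (lcp_prefix_left b a)).length_le

theorem lcp_eq_left_of_prefix {a b : List ℕ} (h : a <+: b) : lcp a b = a :=
  (lcp_prefix_left a b).eq_of_length_le (prefix_lcp (List.prefix_refl a) h).length_le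

theorem List.IsPrefix.take_eq_take_of_le {α : Type*} {u v : List α} (h : u <+: v) {i : ℕ}
    (hi : i ≤ u.length) : v.take i = u.take i := by
  obtain ⟨t, rfl⟩ := h
  exact List.take_append_of_le_length hi

theorem List.IsPrefix.getD_eq_getD_of_lt {α : Type*} {u v : List α} (h : u <+: v) {i : ℕ}
    (hi : i < u.length) (d : α) : v.getD i d = u.getD i d := by
  obtain ⟨t, rfl⟩ := h
  exact List.getD_append u t d i hi

theorem Zpt_self {C : List ℕ → Type*} (ℓ : ∀ v, ℕ → C v) (x : Σ v, C v) : Zpt ℓ x x.1 = x.2 := by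
  simp [Zpt]

theorem Zpt_eq_of_length_lt_lcp {C : List ℕ → Type*} (ℓ : ∀ v, ℕ → C v) {y z : Σ v, C v}
    {w : List ℕ} (hw : w.length < (lcp y.1 z.1).length) : Zpt ℓ y w = Zpt ℓ z w := by
  have hy : w ≠ y.1 := by
    rintro rfl
    exact hw.not_ge (lcp_prefix_left _ _).length_le
  have hz : w ≠ z.1 := by
    rintro rfl
    exact hw.not_ge (lcp_prefix_right _ _).length_le
  rw [Zpt, dif_neg hy, Zpt, dif_neg hz, (lcp_prefix_left _ _).getD_eq_getD_of_lt hw,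
    (lcp_prefix_right _ _).getD_eq_getD_of_lt hw]

section Triangle

variable (ρ : ∀ v : List ℕ, B v) (ℓ : ∀ v : List ℕ, ℕ → B v)

/-- `d_u(ρ_u, Z_u^x)` for the ancestor `u` of `v(x)` at depth `i`: the summands of `dAnc`. -/
noncomputable def rootZptDist (x : Σ v, B v) (i : ℕ) : ℝ :=
  dist (ρ (x.1.take i)) (Zpt ℓ x (x.1.take i))

theorem rootZptDist_nonneg (x : Σ v, B v) (i : ℕ) : 0 ≤ rootZptDist ρ ℓ x i :=
  dist_nonneg

theorem dAnc_eq_sum (w : List ℕ) (x : Σ v, B v) :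
    dAnc ρ ℓ w x = ∑ i ∈ Finset.Ioc w.length x.1.length, rootZptDist ρ ℓ x i := by
  rw [dAnc, Finset.Icc_add_one_left_eq_Ioc]
  rfl

theorem dAnc_nonneg (w : List ℕ) (x : Σ v, B v) : 0 ≤ dAnc ρ ℓ w x := by
  rw [dAnc_eq_sum]
  exact Finset.sum_nonneg fun i _ => rootZptDist_nonneg ρ ℓ x i

theorem dAnc_self (x : Σ v, B v) : dAnc ρ ℓ x.1 x = 0 := by
  simp [dAnc_eq_sum]

theorem dAnc_eq_sum_add {w u : List ℕ} {x : Σ v, B v} (hwu : w.length ≤ u.length)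
    (hux : u.length ≤ x.1.length) :
    dAnc ρ ℓ w x = ∑ i ∈ Finset.Ioc w.length u.length, rootZptDist ρ ℓ x i + dAnc ρ ℓ u x := by
  rw [dAnc_eq_sum, dAnc_eq_sum, Finset.sum_Ioc_consecutive _ hwu hux]

theorem rootZptDist_length_of_prefix {u : List ℕ} {x : Σ v, B v} (hu : u <+: x.1) :
    rootZptDist ρ ℓ x u.length = dist (ρ u) (Zpt ℓ x u) := by
  rw [rootZptDist, ← List.prefix_iff_eq_take.1 hu]

theorem rootZptDist_eq_of_lt_length_lcp {y z : Σ v, B v} {i : ℕ}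
    (hi : i < (lcp y.1 z.1).length) : rootZptDist ρ ℓ y i = rootZptDist ρ ℓ z i := by
  have htake : y.1.take i = z.1.take i := by
    rw [(lcp_prefix_left _ _).take_eq_take_of_le hi.le,
      (lcp_prefix_right _ _).take_eq_take_of_le hi.le]
  have hZ : Zpt ℓ y (z.1.take i) = Zpt ℓ z (z.1.take i) :=
    Zpt_eq_of_length_lt_lcp ℓ ((List.length_take_le _ _).trans_lt hi)
  rw [rootZptDist, rootZptDist, htake, hZ]

theorem dstar_eq_lcp (x y : Σ v, B v) :
    dstar ρ ℓ x y = dist (Zpt ℓ x (lcp x.1 y.1)) (Zpt ℓ y (lcp x.1 y.1))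
      + dAnc ρ ℓ (lcp x.1 y.1) x + dAnc ρ ℓ (lcp x.1 y.1) y := by
  rw [dstar]
  split_ifs with hxy hyx
  · rw [lcp_eq_left_of_prefix hxy, Zpt_self, dAnc_self, add_zero]
  · rw [lcp_comm, lcp_eq_left_of_prefix hyx, Zpt_self, dAnc_self, dist_comm, add_zero,
      add_comm (dist _ _)]
  · rfl

theorem dstar_nonneg (x y : Σ v, B v) : 0 ≤ dstar ρ ℓ x y := by
  rw [dstar_eq_lcp]
  have := dAnc_nonneg ρ ℓ (lcp x.1 y.1) x
  have := dAnc_nonneg ρ ℓ (lcp x.1 y.1) y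
  positivity

theorem dstar_self (x : Σ v, B v) : dstar ρ ℓ x x = 0 := by
  rw [dstar_eq_lcp, lcp_eq_left_of_prefix (List.prefix_refl _), dAnc_self, dist_self, add_zero,
    add_zero]

theorem dstar_comm (x y : Σ v, B v) : dstar ρ ℓ x y = dstar ρ ℓ y x := by
  rw [dstar_eq_lcp, dstar_eq_lcp, lcp_comm y.1, dist_comm, add_right_comm]

theorem dist_root_Zpt_add_dAnc_le {w u : List ℕ} {x : Σ v, B v} (hwu : w.length < u.length)
    (hu : u <+: x.1) : dist (ρ u) (Zpt ℓ x u) + dAnc ρ ℓ u x ≤ dAnc ρ ℓ w x := by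
  rw [dAnc_eq_sum_add ρ ℓ hwu.le hu.length_le, ← rootZptDist_length_of_prefix ρ ℓ hu]
  gcongr
  exact Finset.single_le_sum (fun i _ => rootZptDist_nonneg ρ ℓ x i)
    (Finset.mem_Ioc.2 ⟨hwu, le_rfl⟩)

theorem dstar_le_of_prefix_lcp {w : List ℕ} {x z : Σ v, B v} (hw : w <+: lcp x.1 z.1) :
    dstar ρ ℓ x z ≤ dist (Zpt ℓ x w) (Zpt ℓ z w) + dAnc ρ ℓ w x + dAnc ρ ℓ w z := by
  set M := lcp x.1 z.1
  rcases hw.length_le.eq_or_lt with hlen | hlt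
  · rw [dstar_eq_lcp, hw.eq_of_length hlen]
  have hx := dist_root_Zpt_add_dAnc_le ρ ℓ hlt (lcp_prefix_left x.1 z.1)
  have hz := dist_root_Zpt_add_dAnc_le ρ ℓ hlt (lcp_prefix_right x.1 z.1)
  have hM := dist_triangle_left (Zpt ℓ x M) (Zpt ℓ z M) (ρ M)
  rw [dstar_eq_lcp]
  linarith [dist_nonneg (x := Zpt ℓ x w) (y := Zpt ℓ z w)]

theorem sum_rootZptDist_le {w : List ℕ} {y z : Σ v, B v}
    (hw : w.length < (lcp y.1 z.1).length) :
    ∑ i ∈ Finset.Ioc w.length (lcp y.1 z.1).length, rootZptDist ρ ℓ z i ≤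
      ∑ i ∈ Finset.Ioc w.length (lcp y.1 z.1).length, rootZptDist ρ ℓ y i +
        dist (Zpt ℓ y (lcp y.1 z.1)) (Zpt ℓ z (lcp y.1 z.1)) := by
  set K := lcp y.1 z.1
  -- `y` and `z` have the same ancestors of depth `< K.length`: only the summand at `K` differs
  have hK : K.length ∈ Finset.Ioc w.length K.length := by simp [hw]
  have hbelow : ∀ i ∈ (Finset.Ioc w.length K.length).erase K.length,
      rootZptDist ρ ℓ z i = rootZptDist ρ ℓ y i := fun i hi => by
    simp only [Finset.mem_erase, Finset.mem_Ioc] at hi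
    exact (rootZptDist_eq_of_lt_length_lcp ρ ℓ (lt_of_le_of_ne hi.2.2 hi.1)).symm
  rw [← Finset.add_sum_erase _ _ hK, ← Finset.add_sum_erase _ _ hK, Finset.sum_congr rfl hbelow,
    rootZptDist_length_of_prefix ρ ℓ (lcp_prefix_left y.1 z.1),
    rootZptDist_length_of_prefix ρ ℓ (lcp_prefix_right y.1 z.1)]
  linarith [dist_triangle (ρ K) (Zpt ℓ y K) (Zpt ℓ z K)]

theorem dist_Zpt_add_dAnc_le {w : List ℕ} {y z : Σ v, B v} (hw : w <+: lcp y.1 z.1) :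
    dist (Zpt ℓ y w) (Zpt ℓ z w) + dAnc ρ ℓ w z ≤ dAnc ρ ℓ w y + dstar ρ ℓ y z := by
  set K := lcp y.1 z.1
  rw [dstar_eq_lcp]
  rcases hw.length_le.eq_or_lt with hlen | hlt
  · rw [hw.eq_of_length hlen]
    linarith [dAnc_nonneg ρ ℓ K y]
  rw [Zpt_eq_of_length_lt_lcp ℓ hlt, dist_self,
    dAnc_eq_sum_add ρ ℓ hlt.le (lcp_prefix_left y.1 z.1).length_le,
    dAnc_eq_sum_add ρ ℓ hlt.le (lcp_prefix_right y.1 z.1).length_le]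
  linarith [sum_rootZptDist_le ρ ℓ hlt, dAnc_nonneg ρ ℓ K y]

theorem dstar_triangle_of_lcp_prefix {x y z : Σ v, B v} (h : lcp x.1 y.1 <+: lcp y.1 z.1) :
    dstar ρ ℓ x z ≤ dstar ρ ℓ x y + dstar ρ ℓ y z := by
  set L := lcp x.1 y.1
  have hLz : L <+: lcp x.1 z.1 :=
    prefix_lcp (lcp_prefix_left x.1 y.1) (h.trans (lcp_prefix_right y.1 z.1))
  calc dstar ρ ℓ x z ≤ dist (Zpt ℓ x L) (Zpt ℓ z L) + dAnc ρ ℓ L x + dAnc ρ ℓ L z :=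
        dstar_le_of_prefix_lcp ρ ℓ hLz
    _ ≤ dist (Zpt ℓ x L) (Zpt ℓ y L) + dAnc ρ ℓ L x +
          (dist (Zpt ℓ y L) (Zpt ℓ z L) + dAnc ρ ℓ L z) := by
        linarith [dist_triangle (Zpt ℓ x L) (Zpt ℓ y L) (Zpt ℓ z L)]
    _ ≤ dist (Zpt ℓ x L) (Zpt ℓ y L) + dAnc ρ ℓ L x + (dAnc ρ ℓ L y + dstar ρ ℓ y z) := by
        linarith [dist_Zpt_add_dAnc_le ρ ℓ h]
    _ = dstar ρ ℓ x y + dstar ρ ℓ y z := by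
        rw [dstar_eq_lcp ρ ℓ x y]
        ring

end Triangle

theorem dstar_pseudometric_general
    (ρ : ∀ v : List ℕ, B v) (ℓ : ∀ v : List ℕ, ℕ → B v)
    (x y z : Σ v : List ℕ, B v) :
    0 ≤ dstar ρ ℓ x y ∧
    dstar ρ ℓ x x = 0 ∧
    dstar ρ ℓ x y = dstar ρ ℓ y x ∧
    dstar ρ ℓ x z ≤ dstar ρ ℓ x y + dstar ρ ℓ y z := by
  refine ⟨dstar_nonneg ρ ℓ x y, dstar_self ρ ℓ x, dstar_comm ρ ℓ x y, ?_⟩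
  rcases List.prefix_or_prefix_of_prefix (lcp_prefix_right x.1 y.1) (lcp_prefix_left y.1 z.1)
    with h | h
  · exact dstar_triangle_of_lcp_prefix ρ ℓ h
  · rw [lcp_comm y.1, lcp_comm x.1] at h
    rw [dstar_comm ρ ℓ x z, dstar_comm ρ ℓ x y, dstar_comm ρ ℓ y z, add_comm]
    exact dstar_triangle_of_lcp_prefix ρ ℓ h

/-- For a plane tree `T` with decorations `(B_v, d_v)`, inner roots
`ρ_v` and outer roots `ℓ_v`, the function `d*` on the disjoint union `⊔_{v ∈ T} B_v` is a
pseudometric: nonnegative, vanishing on the diagonal, symmetric, and satisfying the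
triangle inequality. -/
theorem dstar_pseudometric (T : PlaneTree)
    (ρ : ∀ v : List ℕ, B v) (ℓ : ∀ v : List ℕ, ℕ → B v)
    (x y z : Σ v : List ℕ, B v)
    (hx : x.1 ∈ T.verts) (hy : y.1 ∈ T.verts) (hz : z.1 ∈ T.verts) :
    0 ≤ dstar ρ ℓ x y ∧
    dstar ρ ℓ x x = 0 ∧
    dstar ρ ℓ x y = dstar ρ ℓ y x ∧
    dstar ρ ℓ x z ≤ dstar ρ ℓ x y + dstar ρ ℓ y z :=
  dstar_pseudometric_general ρ ℓ x y z

end Decorated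
end
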